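/- arXiv:2311.12622 — 6 statements merged into one kernel-verified Lean document; each statement's English description precedes it below -/
import Mathlib

section
/- For any interval [α, β] ⊆ [0, 1], the number of natural numbers n in [N/2, N] with fractional part of √n lying in [α, β] equals (β − α)·N/2 + O(√N), with implied constant absolute. -/
/-!
On the block `k² ≤ n < (k+1)²` we have `⌊√n⌋ = k`, so `fract √n ∈ [α, β]` exactly when
`(k+α)² ≤ n ≤ (k+β)²`: the block contributes `(β-α)(2k+α+β) ± 1` such `n`. Summing over the
`≈ √M` blocks below `M` counts the `n < M` as `(β-α)M + O(√M)`, and the count over `[N/2, N]`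
is the difference of two such counts.
-/

open Finset

lemma card_filter_range_add_card_filter_Ico (p : ℕ → Prop) [DecidablePred p] {a b : ℕ}
    (hab : a ≤ b) : #{n ∈ range a | p n} + #{n ∈ Ico a b | p n} = #{n ∈ range b | p n} := by
  simp only [card_filter]
  exact sum_range_add_sum_Ico _ hab

lemma sub_sub_one_le_card_Ico_ceil {L U : ℝ} (hL : 0 ≤ L) (hLU : L ≤ U) :
    U - L - 1 ≤ (#(Ico ⌈L⌉₊ ⌈U⌉₊) : ℝ) := by
  rw [Nat.card_Ico, Nat.cast_sub (Nat.ceil_mono hLU)]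
  linarith [Nat.le_ceil U, Nat.ceil_lt_add_one hL]

lemma card_Icc_ceil_floor_le {L U : ℝ} (hU : 0 ≤ U) (hLU : L ≤ U) :
    (#(Icc ⌈L⌉₊ ⌊U⌋₊) : ℝ) ≤ U - L + 1 := by
  have hceil := Nat.le_ceil L
  have hfloor := Nat.floor_le hU
  rw [Nat.card_Icc]
  rcases le_total ⌈L⌉₊ (⌊U⌋₊ + 1) with h | h
  · rw [Nat.cast_sub h]
    push_cast
    linarith
  · rw [Nat.sub_eq_zero_of_le h, Nat.cast_zero]
    linarith

lemma fract_sqrt_mem_Icc_iff {α β x : ℝ} {k : ℕ} (hα : 0 ≤ α) (hβ : 0 ≤ β)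
    (hkx : (k : ℝ) ^ 2 ≤ x) (hxk : x < (k + 1) ^ 2) :
    Int.fract √x ∈ Set.Icc α β ↔ (k + α) ^ 2 ≤ x ∧ x ≤ (k + β) ^ 2 := by
  have hk : (0 : ℝ) ≤ k := k.cast_nonneg
  have hx : 0 ≤ x := (sq_nonneg _).trans hkx
  have hfloor : ⌊√x⌋ = k := by
    rw [Int.floor_eq_iff]
    push_cast
    exact ⟨(Real.le_sqrt hk hx).2 hkx, (Real.sqrt_lt' (by positivity)).2 hxk⟩
  rw [Int.fract, hfloor, Set.mem_Icc, ← Real.le_sqrt (by positivity) hx,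
    ← Real.sqrt_le_left (by positivity)]
  push_cast
  constructor <;> rintro ⟨h₁, h₂⟩ <;> constructor <;> linarith

noncomputable def fractSqrtCount (α β : ℝ) (s : Finset ℕ) : ℕ :=
  #(s.filter fun n : ℕ ↦ Int.fract √n ∈ Set.Icc α β)

section Counting

variable {α β : ℝ} (hα : 0 ≤ α) (hαβ : α ≤ β) (hβ : β ≤ 1)
include hα hαβ hβ

lemma abs_fractSqrtCount_Ico_sq_sub_le (k : ℕ) :
    |(fractSqrtCount α β (Ico (k ^ 2) ((k + 1) ^ 2)) : ℝ) - (β - α) * (2 * k + α + β)| ≤ 1 := by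
  set B : Finset ℕ := Ico (k ^ 2) ((k + 1) ^ 2)
  set L : ℝ := (k + α) ^ 2
  set U : ℝ := (k + β) ^ 2
  have hk : (0 : ℝ) ≤ k := k.cast_nonneg
  have hβ₀ : 0 ≤ β := hα.trans hαβ
  have hkL : (k : ℝ) ^ 2 ≤ L := pow_le_pow_left₀ hk (by linarith) 2
  have hLU : L ≤ U := pow_le_pow_left₀ (by positivity) (by linarith) 2
  have hUk : U ≤ (k + 1) ^ 2 := pow_le_pow_left₀ (by linarith) (by linarith) 2
  have hmem : ∀ n ∈ B,
      Int.fract √n ∈ Set.Icc α β ↔ L ≤ n ∧ (n : ℝ) ≤ U := fun n hn ↦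
    fract_sqrt_mem_Icc_iff hα hβ₀ (mod_cast (mem_Ico.1 hn).1) (mod_cast (mem_Ico.1 hn).2)
  have hlower : Ico ⌈L⌉₊ ⌈U⌉₊ ⊆ B.filter (fun n : ℕ ↦ Int.fract √n ∈ Set.Icc α β) := by
    intro n hn
    obtain ⟨hLn, hnU⟩ := mem_Ico.1 hn
    rw [Nat.ceil_le] at hLn
    rw [Nat.lt_ceil] at hnU
    have hn' : n ∈ B := mem_Ico.2
      ⟨by exact_mod_cast hkL.trans hLn, by exact_mod_cast hnU.trans_le hUk⟩
    exact mem_filter.2 ⟨hn', (hmem n hn').2 ⟨hLn, hnU.le⟩⟩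
  have hupper : B.filter (fun n : ℕ ↦ Int.fract √n ∈ Set.Icc α β) ⊆ Icc ⌈L⌉₊ ⌊U⌋₊ := by
    intro n hn
    obtain ⟨hn', hfract⟩ := mem_filter.1 hn
    obtain ⟨hLn, hnU⟩ := (hmem n hn').1 hfract
    exact mem_Icc.2 ⟨Nat.ceil_le.2 hLn, Nat.le_floor hnU⟩
  have hUL : U - L = (β - α) * (2 * k + α + β) := by ring
  have h₁ := sub_sub_one_le_card_Ico_ceil (by positivity) hLU
  have h₂ := card_Icc_ceil_floor_le (by positivity) hLU
  have h₃ : (#(Ico ⌈L⌉₊ ⌈U⌉₊) : ℝ) ≤ fractSqrtCount α β B := mod_cast card_le_card hlower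
  have h₄ : (fractSqrtCount α β B : ℝ) ≤ #(Icc ⌈L⌉₊ ⌊U⌋₊) := mod_cast card_le_card hupper
  rw [abs_le]
  constructor <;> linarith

lemma abs_fractSqrtCount_range_sq_sub_le (m : ℕ) :
    |(fractSqrtCount α β (range (m ^ 2)) : ℝ) - (β - α) * m ^ 2| ≤ 2 * m := by
  induction m with
  | zero => simp [fractSqrtCount]
  | succ m ih =>
    have hsplit : (fractSqrtCount α β (range (m ^ 2)) : ℝ)
        + fractSqrtCount α β (Ico (m ^ 2) ((m + 1) ^ 2)) = fractSqrtCount α β (range ((m + 1) ^ 2)) :=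
      mod_cast card_filter_range_add_card_filter_Ico _ (Nat.pow_le_pow_left m.le_succ 2)
    have hblock := abs_fractSqrtCount_Ico_sq_sub_le hα hαβ hβ m
    have hcross : |(β - α) * (α + β - 1)| ≤ 1 := by
      rw [abs_le]
      constructor <;> nlinarith
    rw [abs_le] at ih hblock hcross ⊢
    push_cast
    constructor <;> linarith

lemma abs_fractSqrtCount_range_sub_le (M : ℕ) :
    |(fractSqrtCount α β (range M) : ℝ) - (β - α) * M| ≤ 4 * √M := by
  set m := M.sqrt
  have hmM : m ^ 2 ≤ M := M.sqrt_le'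
  have hMm : (M : ℝ) + 1 ≤ (m + 1) ^ 2 := mod_cast M.lt_succ_sqrt'
  have hsplit : (fractSqrtCount α β (range (m ^ 2)) : ℝ)
      + fractSqrtCount α β (Ico (m ^ 2) M) = fractSqrtCount α β (range M) :=
    mod_cast card_filter_range_add_card_filter_Ico _ hmM
  have htail : (fractSqrtCount α β (Ico (m ^ 2) M) : ℝ) ≤ M - m ^ 2 := by
    rw [← Nat.cast_pow, ← Nat.cast_sub hmM, ← Nat.card_Ico, Nat.cast_le]
    exact card_filter_le _ _
  have hgap : (0 : ℝ) ≤ M - m ^ 2 := by rw [sub_nonneg]; exact_mod_cast hmM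
  have hweight : (β - α) * (M - m ^ 2) ≤ M - m ^ 2 :=
    mul_le_of_le_one_left hgap (by linarith)
  have hweight₀ : 0 ≤ (β - α) * (M - m ^ 2) := mul_nonneg (by linarith) hgap
  have hsq := abs_fractSqrtCount_range_sq_sub_le hα hαβ hβ m
  have hm : (m : ℝ) ≤ √M := Real.nat_sqrt_le_real_sqrt
  rw [abs_le] at hsq ⊢
  constructor <;> linarith

lemma abs_fractSqrtCount_Ico_sub_le {a b : ℕ} (hab : a ≤ b) :
    |(fractSqrtCount α β (Ico a b) : ℝ) - (β - α) * (b - a)| ≤ 4 * √b + 4 * √a := by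
  have hsplit : (fractSqrtCount α β (range a) : ℝ)
      + fractSqrtCount α β (Ico a b) = fractSqrtCount α β (range b) :=
    mod_cast card_filter_range_add_card_filter_Ico _ hab
  have ha := abs_fractSqrtCount_range_sub_le hα hαβ hβ a
  have hb := abs_fractSqrtCount_range_sub_le hα hαβ hβ b
  rw [abs_le] at ha hb ⊢
  constructor <;> linarith

lemma abs_fractSqrtCount_Ico_ceil_half_sub_le {N : ℕ} (hN : 0 < N) :
    |(fractSqrtCount α β (Ico ⌈(N : ℝ) / 2⌉₊ (N + 1)) : ℝ) - (β - α) * N / 2| ≤ 13 * √N := by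
  set a := ⌈(N : ℝ) / 2⌉₊
  have haN : a ≤ N := Nat.ceil_le.2 (by linarith)
  have hcount := abs_fractSqrtCount_Ico_sub_le hα hαβ hβ (haN.trans N.le_succ)
  have hroot₁ : 1 ≤ √(N : ℝ) := Real.one_le_sqrt.2 (mod_cast hN)
  have hrootN : √((N + 1 : ℕ) : ℝ) ≤ 2 * √N := by
    rw [show (2 : ℝ) * √N = √(4 * N) by rw [Real.sqrt_mul' _ N.cast_nonneg]; norm_num]
    exact Real.sqrt_le_sqrt (by push_cast; linarith [(N.one_le_cast (α := ℝ)).2 hN])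
  have hroota : √(a : ℝ) ≤ √N := Real.sqrt_le_sqrt (mod_cast haN)
  have hceil : (N : ℝ) / 2 ≤ a := Nat.le_ceil _
  have hceil' : (a : ℝ) < N / 2 + 1 := Nat.ceil_lt_add_one (by positivity)
  have hweight : 0 ≤ (β - α) * ((N + 1 : ℕ) - a - N / 2) :=
    mul_nonneg (by linarith) (by push_cast; linarith)
  have hweight' : (β - α) * ((N + 1 : ℕ) - a - N / 2) ≤ 1 :=
    mul_le_one₀ (by linarith) (by push_cast; linarith) (by push_cast; linarith)
  rw [abs_le] at hcount ⊢
  constructor <;> linarith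

end Counting

/-- Fejér's counting bound: for any `[α,β] ⊆ [0,1]`, the number of `n ∈ [N/2, N]` with
fractional part of `√n` in `[α,β]` equals `(β−α)·N/2 + O(√N)`, absolute implied constant. -/
theorem stmt3 : ∃ c : ℝ, 0 < c ∧ ∀ (N : ℕ) (α β : ℝ), 0 ≤ α → α ≤ β → β ≤ 1 →
    |(((Finset.Icc 1 N).filter fun n : ℕ =>
        (N : ℝ) / 2 ≤ n ∧ Int.fract (Real.sqrt n) ∈ Set.Icc α β).card : ℝ)
      - (β - α) * N / 2| ≤ c * Real.sqrt N := by
  refine ⟨13, by norm_num, fun N α β hα hαβ hβ ↦ ?_⟩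
  rcases N.eq_zero_or_pos with rfl | hN
  · simp
  have ha₁ : 1 ≤ ⌈(N : ℝ) / 2⌉₊ := Nat.one_le_ceil_iff.2 (by positivity)
  have hwindow : ((Icc 1 N).filter fun n : ℕ ↦ (N : ℝ) / 2 ≤ n ∧ Int.fract √n ∈ Set.Icc α β)
      = (Ico ⌈(N : ℝ) / 2⌉₊ (N + 1)).filter fun n : ℕ ↦ Int.fract √n ∈ Set.Icc α β := by
    ext n
    simp only [mem_filter, mem_Icc, mem_Ico, ← Nat.ceil_le, Nat.lt_succ_iff]
    exact ⟨fun ⟨⟨_, hnN⟩, han, hfract⟩ ↦ ⟨⟨han, hnN⟩, hfract⟩,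
      fun ⟨⟨han, hnN⟩, hfract⟩ ↦ ⟨⟨ha₁.trans han, hnN⟩, han, hfract⟩⟩
  rw [hwindow]
  exact abs_fractSqrtCount_Ico_ceil_half_sub_le hα hαβ hβ hN
end

section
/- The sequence (a√n + γ)_{n≥1} is equidistributed modulo 1 for every real a ≠ 0 and every real γ. -/
/-
For `a > 0` the indices `n` with `a√n + γ ∈ [m + α, m + β]` are the integers between
`((m + α - γ) / a)²` and `((m + β - γ) / a)²`, so there are `2 (β - α) (m + β - γ) / a² + O(1)` of
them. Only `O(√N)` values of `m` are met by `n ≤ N`, and the main terms telescope against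
`(m + 1)² - m²`, so at most `(β - α) N + O(√N)` of the first `N` terms lie in `[α, β] + ℤ`. This
upper bound holds for every interval; replacing `(a, γ)` by `(-a, -γ)` gives it for `a < 0`, and
applied to the complementary arcs `[0, α]` and `[β, 1]` it yields the matching lower bound. The
fractional part only differs from reduction modulo `1` at integers, the degenerate arc `[0, 0]`.
-/

open scoped Classical

open Filter Finset Real
open scoped Topology

def iccModOne (α β : ℝ) : Set ℝ := {x | ∃ m : ℤ, x - m ∈ Set.Icc α β}

noncomputable def sqrtCount (a γ : ℝ) (s : Set ℝ) (N : ℕ) : ℕ :=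
  ((Finset.Icc 1 N).filter fun n : ℕ => a * √(n : ℝ) + γ ∈ s).card

section iccModOne

variable {x c α β : ℝ}

theorem add_mem_iccModOne : x + c ∈ iccModOne α β ↔ x ∈ iccModOne (α - c) (β - c) := by
  constructor <;> rintro ⟨m, h₁, h₂⟩ <;> exact ⟨m, by linarith, by linarith⟩

theorem mem_iccModOne_sub_intCast (k : ℤ) :
    x ∈ iccModOne (α - k) (β - k) ↔ x ∈ iccModOne α β := by
  constructor <;> rintro ⟨m, h₁, h₂⟩
  · exact ⟨m - k, by push_cast; linarith, by push_cast; linarith⟩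
  · exact ⟨m + k, by push_cast; linarith, by push_cast; linarith⟩

theorem neg_mem_iccModOne : -x ∈ iccModOne α β ↔ x ∈ iccModOne (-β) (-α) := by
  constructor <;> rintro ⟨m, h₁, h₂⟩ <;> exact ⟨-m, by push_cast; linarith, by push_cast; linarith⟩

theorem fract_preimage_Icc_subset_iccModOne : Int.fract ⁻¹' Set.Icc α β ⊆ iccModOne α β :=
  fun x hx => ⟨⌊x⌋, hx⟩

theorem iccModOne_subset_fract_preimage_union (hα : 0 ≤ α) (hβ : β ≤ 1) :
    iccModOne α β ⊆ Int.fract ⁻¹' Set.Icc α β ∪ iccModOne 0 0 := by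
  rintro x ⟨m, hmα, hmβ⟩
  rcases hmβ.trans hβ |>.lt_or_eq with hlt | heq
  · have : ⌊x⌋ = m := Int.floor_eq_iff.2 ⟨by linarith, by linarith⟩
    exact Or.inl (by simpa [Int.fract, this] using And.intro hmα hmβ)
  · exact Or.inr ⟨m + 1, by push_cast; constructor <;> linarith⟩

theorem univ_subset_iccModOne_union :
    Set.univ ⊆ iccModOne 0 α ∪ iccModOne α β ∪ iccModOne β 1 := by
  intro x _
  have h₀ := Int.fract_nonneg x
  have h₁ := (Int.fract_lt_one x).le
  rcases le_total (Int.fract x) α with hxα | hαx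
  · exact Or.inl (Or.inl ⟨⌊x⌋, h₀, hxα⟩)
  rcases le_total (Int.fract x) β with hxβ | hβx
  · exact Or.inl (Or.inr ⟨⌊x⌋, hαx, hxβ⟩)
  · exact Or.inr ⟨⌊x⌋, hβx, h₁⟩

end iccModOne

section sqrtCount

variable {a γ : ℝ} {s t : Set ℝ} {N : ℕ}

theorem sqrtCount_congr {a' γ' : ℝ}
    (h : ∀ n : ℕ, a * √(n : ℝ) + γ ∈ s ↔ a' * √(n : ℝ) + γ' ∈ t) :
    sqrtCount a γ s N = sqrtCount a' γ' t N :=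
  congrArg card (filter_congr fun n _ => h n)

theorem sqrtCount_mono (hst : s ⊆ t) : sqrtCount a γ s N ≤ sqrtCount a γ t N :=
  card_le_card (monotone_filter_right _ fun _ _ hx => hst hx)

theorem sqrtCount_union_le : sqrtCount a γ (s ∪ t) N ≤ sqrtCount a γ s N + sqrtCount a γ t N := by
  unfold sqrtCount
  simp only [Set.mem_union, filter_or]
  exact card_union_le _ _

theorem sqrtCount_univ : sqrtCount a γ Set.univ N = N := by
  simp [sqrtCount]

theorem sqrtCount_iccModOne_le_fract_add {α β : ℝ} (hα : 0 ≤ α) (hβ : β ≤ 1) :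
    sqrtCount a γ (iccModOne α β) N ≤
      sqrtCount a γ (Int.fract ⁻¹' Set.Icc α β) N + sqrtCount a γ (iccModOne 0 0) N :=
  (sqrtCount_mono (iccModOne_subset_fract_preimage_union hα hβ)).trans sqrtCount_union_le

end sqrtCount

theorem card_filter_sqrt_mem_Icc_le (S : Finset ℕ) {u v : ℝ} (huv : u ≤ v) (hv : 0 ≤ v) :
    ((S.filter fun n : ℕ => √(n : ℝ) ∈ Set.Icc u v).card : ℝ) ≤ 2 * v * (v - u) + 1 := by
  set A := S.filter fun n : ℕ => √(n : ℝ) ∈ Set.Icc u v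
  set p := max u 0
  have hsub : A ⊆ Finset.Icc ⌈p ^ 2⌉₊ ⌊v ^ 2⌋₊ := by
    intro n hn
    obtain ⟨-, hun, hnv⟩ := mem_filter.1 hn
    have hn : (n : ℝ) = √n ^ 2 := (sq_sqrt n.cast_nonneg).symm
    refine Finset.mem_Icc.2 ⟨Nat.ceil_le.2 ?_, Nat.le_floor ?_⟩ <;> rw [hn]
    · exact pow_le_pow_left₀ (le_max_right _ _) (max_le hun (sqrt_nonneg _)) 2
    · exact pow_le_pow_left₀ (sqrt_nonneg _) hnv 2
  have hcard : A.card + ⌈p ^ 2⌉₊ ≤ ⌊v ^ 2⌋₊ + 1 := by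
    have := card_le_card hsub
    have : ⌈p ^ 2⌉₊ ≤ ⌊v ^ 2⌋₊ + 1 :=
      (Nat.ceil_mono (pow_le_pow_left₀ (le_max_right u 0) (max_le huv hv) 2)).trans
        (Nat.ceil_le_floor_add_one (v ^ 2))
    rw [Nat.card_Icc] at *
    omega
  have hcast : (A.card : ℝ) + ⌈p ^ 2⌉₊ ≤ ⌊v ^ 2⌋₊ + 1 := by exact_mod_cast hcard
  have := Nat.le_ceil (p ^ 2)
  have := Nat.floor_le (sq_nonneg v)
  have : v ^ 2 - p ^ 2 ≤ 2 * v * (v - u) := by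
    rcases le_total u 0 with hu | hu
    · simp only [p, max_eq_right hu]; nlinarith
    · simp only [p, max_eq_left hu]; nlinarith
  linarith

theorem sum_range_two_mul_add_le (L : ℕ) (β : ℝ) :
    ∑ m ∈ range L, 2 * ((m : ℝ) + β) ≤ (L + β) ^ 2 := by
  calc ∑ m ∈ range L, 2 * ((m : ℝ) + β)
      ≤ ∑ m ∈ range L, ((((m + 1 : ℕ) : ℝ) + β) ^ 2 - ((m : ℝ) + β) ^ 2) := by
        gcongr with m; push_cast; nlinarith
    _ = (L + β) ^ 2 - β ^ 2 := by
        rw [sum_range_sub (fun m : ℕ => ((m : ℝ) + β) ^ 2)]; simp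
    _ ≤ (L + β) ^ 2 := by linarith [sq_nonneg β]

theorem sqrtCount_iccModOne_le {a α β : ℝ} (ha : 0 < a) (hαβ : α ≤ β) (hβ₀ : 0 ≤ β)
    (hβ₁ : β ≤ 1) (N : ℕ) :
    (sqrtCount a 0 (iccModOne α β) N : ℝ) ≤
      (β - α) / a ^ 2 * (a * √N + (β - α) + 2) ^ 2 + (a * √N + (β - α) + 1) := by
  have hc : 0 ≤ (β - α) / a ^ 2 := div_nonneg (sub_nonneg.2 hαβ) (sq_nonneg a)
  set L := ⌊a * √N + (β - α)⌋₊ + 1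
  have hL : (L : ℝ) ≤ a * √N + (β - α) + 1 := by
    simp only [L, Nat.cast_add, Nat.cast_one]
    linarith [Nat.floor_le (show 0 ≤ a * √N + (β - α) by positivity)]
  set block : ℕ → Finset ℕ := fun m =>
    (Finset.Icc 1 N).filter fun n : ℕ => √(n : ℝ) ∈ Set.Icc ((m + α) / a) ((m + β) / a)
  have hsub : ((Finset.Icc 1 N).filter fun n : ℕ => a * √(n : ℝ) + 0 ∈ iccModOne α β) ⊆
      (range L).biUnion block := by
    intro n hn
    obtain ⟨hnN, m, hmα, hmβ⟩ := mem_filter.1 hn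
    obtain ⟨hn1, hnN'⟩ := Finset.mem_Icc.1 hnN
    have hsqrt_pos : 0 < √(n : ℝ) := sqrt_pos.2 (by exact_mod_cast hn1)
    have hm₀ : 0 ≤ m := by
      have : ((-1 : ℤ) : ℝ) < m := by push_cast; nlinarith
      have : (-1 : ℤ) < m := by exact_mod_cast this
      omega
    lift m to ℕ using hm₀
    have hsqrt_le : √(n : ℝ) ≤ √N := sqrt_le_sqrt (by exact_mod_cast hnN')
    refine mem_biUnion.2 ⟨m, mem_range.2 (Nat.lt_succ_of_le (Nat.le_floor ?_)), ?_⟩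
    · push_cast at hmα; nlinarith
    · refine mem_filter.2 ⟨hnN, ?_, ?_⟩
      · rw [div_le_iff₀ ha]; push_cast at hmα; linarith
      · rw [le_div_iff₀ ha]; push_cast at hmβ; linarith
  have hblock : ∀ m ∈ range L, ((block m).card : ℝ) ≤ (β - α) / a ^ 2 * (2 * (m + β)) + 1 := by
    intro m _
    have hmβ : 0 ≤ ((m : ℝ) + β) / a := by positivity
    calc ((block m).card : ℝ) ≤ 2 * ((m + β) / a) * ((m + β) / a - (m + α) / a) + 1 :=
          card_filter_sqrt_mem_Icc_le _ (by gcongr) hmβ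
      _ = (β - α) / a ^ 2 * (2 * (m + β)) + 1 := by field_simp; ring
  calc (sqrtCount a 0 (iccModOne α β) N : ℝ)
      ≤ ∑ m ∈ range L, ((block m).card : ℝ) := by
        exact_mod_cast (card_le_card hsub).trans card_biUnion_le
    _ ≤ ∑ m ∈ range L, ((β - α) / a ^ 2 * (2 * (m + β)) + 1) := sum_le_sum hblock
    _ = (β - α) / a ^ 2 * ∑ m ∈ range L, 2 * ((m : ℝ) + β) + L := by
        rw [sum_add_distrib, ← mul_sum]; simp
    _ ≤ (β - α) / a ^ 2 * (L + β) ^ 2 + L := by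
        gcongr
        exact sum_range_two_mul_add_le L β
    _ ≤ _ := add_le_add (mul_le_mul_of_nonneg_left
          (pow_le_pow_left₀ (by positivity) (by linarith) 2) hc) hL

theorem exists_sqrtCount_iccModOne_le_of_pos {a : ℝ} (ha : 0 < a) (γ : ℝ) {α β : ℝ}
    (hαβ : α ≤ β) : ∃ K, ∀ N : ℕ,
      (sqrtCount a γ (iccModOne α β) N : ℝ) ≤ (β - α) * N + K * (√N + 1) := by
  set k := ⌊β - γ⌋
  have hshift : ∀ N, sqrtCount a γ (iccModOne α β) N =
      sqrtCount a 0 (iccModOne (α - γ - k) (β - γ - k)) N := fun N =>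
    sqrtCount_congr fun n => by rw [add_zero, mem_iccModOne_sub_intCast, add_mem_iccModOne]
  have hβ₀ : 0 ≤ β - γ - k := Int.fract_nonneg (β - γ)
  have hβ₁ : β - γ - k ≤ 1 := (Int.fract_lt_one (β - γ)).le
  set h := β - α
  have hh : 0 ≤ h := sub_nonneg.2 hαβ
  refine ⟨2 * h * (h + 2) / a + a + (h * (h + 2) ^ 2 / a ^ 2 + h + 1), fun N => ?_⟩
  have hbound := sqrtCount_iccModOne_le ha (by linarith : α - γ - k ≤ β - γ - k) hβ₀ hβ₁ N
  rw [← hshift, show β - γ - k - (α - γ - k) = h by ring] at hbound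
  have hN : √(N : ℝ) ^ 2 = N := sq_sqrt N.cast_nonneg
  have hexpand : h / a ^ 2 * (a * √N + h + 2) ^ 2 + (a * √N + h + 1) =
      h * √N ^ 2 + (2 * h * (h + 2) / a + a) * √N + (h * (h + 2) ^ 2 / a ^ 2 + h + 1) := by
    field_simp; ring
  have : 0 ≤ 2 * h * (h + 2) / a + a := by positivity
  have : 0 ≤ h * (h + 2) ^ 2 / a ^ 2 + h + 1 := by positivity
  nlinarith [sqrt_nonneg (N : ℝ)]

theorem exists_sqrtCount_iccModOne_le {a : ℝ} (ha : a ≠ 0) (γ : ℝ) {α β : ℝ}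
    (hαβ : α ≤ β) : ∃ K, ∀ N : ℕ,
      (sqrtCount a γ (iccModOne α β) N : ℝ) ≤ (β - α) * N + K * (√N + 1) := by
  rcases ha.lt_or_gt with hneg | hpos
  · obtain ⟨K, hK⟩ := exists_sqrtCount_iccModOne_le_of_pos (neg_pos.2 hneg) (-γ) (neg_le_neg hαβ)
    refine ⟨K, fun N => ?_⟩
    rw [sqrtCount_congr (a' := -a) (γ' := -γ) (t := iccModOne (-β) (-α)) fun n => by
      rw [← neg_mem_iccModOne, neg_add, neg_mul, neg_neg, neg_neg]]
    convert hK N using 2; ring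
  · exact exists_sqrtCount_iccModOne_le_of_pos hpos γ hαβ

theorem exists_le_sqrtCount_iccModOne {a : ℝ} (ha : a ≠ 0) (γ : ℝ) {α β : ℝ} (hα : 0 ≤ α)
    (hβ : β ≤ 1) : ∃ K, ∀ N : ℕ,
      (β - α) * N - K * (√N + 1) ≤ (sqrtCount a γ (iccModOne α β) N : ℝ) := by
  obtain ⟨K₀, hK₀⟩ := exists_sqrtCount_iccModOne_le ha γ hα
  obtain ⟨K₁, hK₁⟩ := exists_sqrtCount_iccModOne_le ha γ hβ
  refine ⟨K₀ + K₁, fun N => ?_⟩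
  have hcover : N ≤ sqrtCount a γ (iccModOne 0 α) N + sqrtCount a γ (iccModOne α β) N
      + sqrtCount a γ (iccModOne β 1) N :=
    calc N = sqrtCount a γ Set.univ N := sqrtCount_univ.symm
      _ ≤ _ := sqrtCount_mono univ_subset_iccModOne_union
      _ ≤ sqrtCount a γ (iccModOne 0 α ∪ iccModOne α β) N + sqrtCount a γ (iccModOne β 1) N :=
        sqrtCount_union_le
      _ ≤ _ := Nat.add_le_add_right sqrtCount_union_le _
  have : (N : ℝ) ≤ sqrtCount a γ (iccModOne 0 α) N + sqrtCount a γ (iccModOne α β) N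
      + sqrtCount a γ (iccModOne β 1) N := by exact_mod_cast hcover
  linarith [hK₀ N, hK₁ N]

theorem tendsto_sqrt_add_one_div_nhds_zero :
    Tendsto (fun N : ℕ => (√(N : ℝ) + 1) / N) atTop (𝓝 0) := by
  have h : Tendsto (fun N : ℕ => (√(N : ℝ))⁻¹ + (N : ℝ)⁻¹) atTop (𝓝 0) := by
    simpa using (tendsto_inv_atTop_zero.comp (tendsto_sqrt_atTop.comp
      tendsto_natCast_atTop_atTop)).add tendsto_inv_atTop_nhds_zero_nat
  refine h.congr' ?_
  filter_upwards [eventually_gt_atTop 0] with N hN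
  have hN : (0 : ℝ) < N := by exact_mod_cast hN
  have hs : √(N : ℝ) * √N = N := mul_self_sqrt hN.le
  field_simp
  linarith

theorem tendsto_div_of_sub_sqrt_le_of_le_add_sqrt {f : ℕ → ℝ} {c K₁ K₂ : ℝ}
    (hlower : ∀ N : ℕ, c * N - K₁ * (√N + 1) ≤ f N)
    (hupper : ∀ N : ℕ, f N ≤ c * N + K₂ * (√N + 1)) :
    Tendsto (fun N : ℕ => f N / N) atTop (𝓝 c) := by
  have h := tendsto_sqrt_add_one_div_nhds_zero
  refine tendsto_of_tendsto_of_tendsto_of_le_of_le' (by simpa using (h.const_mul K₁).const_sub c)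
    (by simpa using (h.const_mul K₂).const_add c) ?_ ?_ <;>
  filter_upwards [eventually_gt_atTop 0] with N hN <;>
  have hN : (0 : ℝ) < N := by exact_mod_cast hN
  · rw [show c - K₁ * ((√N + 1) / N) = (c * N - K₁ * (√N + 1)) / N by field_simp]
    exact div_le_div_of_nonneg_right (hlower N) hN.le
  · rw [show c + K₂ * ((√N + 1) / N) = (c * N + K₂ * (√N + 1)) / N by field_simp]
    exact div_le_div_of_nonneg_right (hupper N) hN.le

/-- The sequence `(a√n + γ)` is equidistributed modulo 1 for every real `a ≠ 0` and `γ`. -/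
theorem stmt5 (a γ : ℝ) (ha : a ≠ 0) :
    ∀ α β : ℝ, 0 ≤ α → α ≤ β → β ≤ 1 →
      Filter.Tendsto (fun N : ℕ =>
          (((Finset.Icc 1 N).filter fun n : ℕ =>
            Int.fract (a * Real.sqrt n + γ) ∈ Set.Icc α β).card : ℝ) / N)
        Filter.atTop (nhds (β - α)) := by
  intro α β hα hαβ hβ
  obtain ⟨K₁, hupper⟩ := exists_sqrtCount_iccModOne_le ha γ hαβ
  obtain ⟨K₂, hlower⟩ := exists_le_sqrtCount_iccModOne ha γ hα hβ
  obtain ⟨K₃, hintegers⟩ := exists_sqrtCount_iccModOne_le ha γ (le_refl 0)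
  have hfract : ∀ N, ((Finset.Icc 1 N).filter fun n : ℕ =>
      Int.fract (a * Real.sqrt n + γ) ∈ Set.Icc α β).card =
        sqrtCount a γ (Int.fract ⁻¹' Set.Icc α β) N :=
    fun N => congrArg card (filter_congr fun _ _ => Iff.rfl)
  simp only [hfract]
  refine tendsto_div_of_sub_sqrt_le_of_le_add_sqrt (K₁ := K₂ + K₃) (K₂ := K₁)
    (fun N => ?_) (fun N => ?_)
  · have : (sqrtCount a γ (iccModOne α β) N : ℝ) ≤
        sqrtCount a γ (Int.fract ⁻¹' Set.Icc α β) N + sqrtCount a γ (iccModOne 0 0) N := by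
      exact_mod_cast sqrtCount_iccModOne_le_fract_add hα hβ
    linarith [hlower N, hintegers N]
  · have : (sqrtCount a γ (Int.fract ⁻¹' Set.Icc α β) N : ℝ) ≤ sqrtCount a γ (iccModOne α β) N := by
      exact_mod_cast sqrtCount_mono fract_preimage_Icc_subset_iccModOne
    linarith [hupper N]
end

section
/- Let a > 0, γ ∈ ℝ. There is a constant c = c(a, γ) > 0 such that for all N ≥ 1 and every interval [α, β] ⊆ [0, 1], |#{n ∈ [N/2, N] : ((a√n + γ)) ∈ [α, β]} − (β − α)·N/2| ≤ c·√N. -/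
/-!
Put `x n = a √n + γ`. The `n ∈ [M, N]` with `((x n)) ∈ [α, β]` are those with
`x n ∈ [k + α, k + β]` for some integer `k`, and only the `O(a √N)` integers `k` between
`⌊a √M + γ⌋` and `⌊a √N + γ⌋` occur. For fixed `k` these `n` are the integers of a real interval,
so there are `G (k + β) - G (k + α) + O(1)` of them, where `G y` is the square of `(y - γ) / a`
clamped to `[√M, √N]`. Telescoping, `∑ₖ (β - α) (G (k + 1) - G k) = (β - α) (N - M)`, and the
difference of the two sums is a sum of defects
`G (k + β) - G (k + α) - (β - α) (G (k + 1) - G k)`: on the periods `[k, k + 1]` where `G` is a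
quadratic in `y` with leading coefficient `1 / a²` the defect is `(β - α) (α + β - 1) / a²`, and on
the two extreme periods it is at most the increment `G (k + 1) - G k ≤ 2 √N / a` of the monotone
`G`. All errors are `O(√N)`.
-/

open scoped Classical

open Finset

lemma Int.sum_Icc_sub {G : Type*} [AddCommGroup G] (f : ℤ → G) {a b : ℤ} (h : a ≤ b + 1) :
    ∑ k ∈ Icc a b, (f (k + 1) - f k) = f (b + 1) - f a := by
  rw [Int.Icc_eq_finset_map, sum_map]
  simp only [Function.Embedding.trans_apply, Nat.castEmbedding_apply, addLeftEmbedding_apply]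
  have := sum_range_sub (fun j : ℕ => f (a + j)) (b + 1 - a).toNat
  push_cast at this
  rw [show a + ((b + 1 - a).toNat : ℤ) = b + 1 by omega, add_zero] at this
  simpa only [add_assoc] using this

lemma abs_card_Icc_ceil_floor_sub_le {x y : ℝ} (hx : 0 ≤ x) (hxy : x ≤ y) :
    |(#(Icc ⌈x⌉₊ ⌊y⌋₊) : ℝ) - (y - x)| ≤ 1 := by
  have hceil : (⌈x⌉₊ : ℝ) < x + 1 := Nat.ceil_lt_add_one hx
  have hfloor : y < ⌊y⌋₊ + 1 := Nat.lt_floor_add_one y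
  have hle : ⌈x⌉₊ ≤ ⌊y⌋₊ + 1 := Nat.ceil_le.2 (by push_cast; linarith)
  rw [Nat.card_Icc, Nat.cast_sub hle, abs_le]
  push_cast
  constructor <;> linarith [Nat.le_ceil x, Nat.floor_le (hx.trans hxy)]

noncomputable def clampSq (s t w : ℝ) : ℝ := max s (min t w) ^ 2

section ClampSq

variable {s t : ℝ}

lemma clampSq_of_le {w : ℝ} (hst : s ≤ t) (hw : w ≤ s) : clampSq s t w = s ^ 2 := by
  rw [clampSq, min_eq_right (hw.trans hst), max_eq_left hw]

lemma clampSq_of_ge {w : ℝ} (hst : s ≤ t) (hw : t ≤ w) : clampSq s t w = t ^ 2 := by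
  rw [clampSq, min_eq_left hw, max_eq_right hst]

lemma clampSq_of_mem {w : ℝ} (hs : s ≤ w) (ht : w ≤ t) : clampSq s t w = w ^ 2 := by
  rw [clampSq, min_eq_right ht, max_eq_right hs]

lemma monotone_clampSq (hs : 0 ≤ s) : Monotone (clampSq s t) := fun _ _ h =>
  pow_le_pow_left₀ (hs.trans (le_max_left _ _)) (max_le_max le_rfl (min_le_min le_rfl h)) 2

lemma clampSq_sub_le (hs : 0 ≤ s) (hst : s ≤ t) {w w' : ℝ} (h : w ≤ w') :
    clampSq s t w' - clampSq s t w ≤ 2 * t * (w' - w) := by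
  have hlip : max s (min t w') - max s (min t w) ≤ w' - w := by grind
  have hc : 0 ≤ max s (min t w) := hs.trans (le_max_left _ _)
  have hcc' : max s (min t w) ≤ max s (min t w') := max_le_max le_rfl (min_le_min le_rfl h)
  have hc't : max s (min t w') ≤ t := max_le hst (min_le_left _ _)
  calc clampSq s t w' - clampSq s t w
      = (max s (min t w') - max s (min t w)) * (max s (min t w') + max s (min t w)) := by
        rw [clampSq, clampSq]; ring
    _ ≤ (w' - w) * (2 * t) := mul_le_mul hlip (by linarith) (by linarith) (by linarith)
    _ = 2 * t * (w' - w) := by ring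

end ClampSq

lemma abs_card_filter_sqrt_mem_Icc_sub_le {M N : ℕ} (hMN : M ≤ N) {u v : ℝ} (huv : u ≤ v) :
    |(#((Icc M N).filter fun n : ℕ => √(n : ℝ) ∈ Set.Icc u v) : ℝ) -
        (clampSq √M √N v - clampSq √M √N u)| ≤ 1 := by
  have hst : √M ≤ √N := Real.sqrt_le_sqrt (by exact_mod_cast hMN)
  have hrange : ∀ n ∈ Icc M N, √M ≤ √n ∧ √n ≤ √N := fun n hn => by
    rw [mem_Icc] at hn
    exact ⟨Real.sqrt_le_sqrt (by exact_mod_cast hn.1), Real.sqrt_le_sqrt (by exact_mod_cast hn.2)⟩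
  by_cases hv : v < √M
  · rw [filter_false_of_mem fun n hn h => by linarith [h.2, (hrange n hn).1],
      clampSq_of_le hst hv.le, clampSq_of_le hst (huv.trans hv.le)]
    simp
  by_cases hu : √N < u
  · rw [filter_false_of_mem fun n hn h => by linarith [h.1, (hrange n hn).2],
      clampSq_of_ge hst hu.le, clampSq_of_ge hst (hu.le.trans huv)]
    simp
  push Not at hu hv
  have hlo : 0 ≤ max √M u := (Real.sqrt_nonneg _).trans (le_max_left _ _)
  have hhi : 0 ≤ min √N v := (Real.sqrt_nonneg _).trans (le_min hst hv)
  have hfilter : (Icc M N).filter (fun n : ℕ => √(n : ℝ) ∈ Set.Icc u v) =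
      Icc ⌈max √M u ^ 2⌉₊ ⌊min √N v ^ 2⌋₊ := by
    ext n
    have hsq : (max √M u ^ 2 ≤ n ↔ max √M u ≤ √n) ∧ (n ≤ min √N v ^ 2 ↔ √n ≤ min √N v) :=
      ⟨(Real.le_sqrt hlo (Nat.cast_nonneg n)).symm, (Real.sqrt_le_left hhi).symm⟩
    simp only [mem_filter, mem_Icc, Set.mem_Icc, Nat.ceil_le, Nat.le_floor_iff (sq_nonneg _),
      hsq, max_le_iff, le_min_iff, Real.sqrt_le_sqrt_iff (Nat.cast_nonneg _), Nat.cast_le]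
    tauto
  rw [hfilter, clampSq, clampSq, min_eq_right hu, max_eq_right (le_min hst hv)]
  exact abs_card_Icc_ceil_floor_sub_le (sq_nonneg _)
    (pow_le_pow_left₀ hlo (max_le (le_min hst hv) (le_min hu huv)) 2)

section FractDecomposition

variable {ι : Type*} (W : Finset ι) (x : ι → ℝ) {α β : ℝ}

lemma card_filter_fract_mem_Icc_eq_sum {K : Finset ℤ} (hK : ∀ n ∈ W, ⌊x n⌋ ∈ K) :
    #{n ∈ W | Int.fract (x n) ∈ Set.Icc α β} =
      ∑ k ∈ K, #{n ∈ W | x n ∈ Set.Icc (k + α) (k + β) ∧ ⌊x n⌋ = k} := by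
  rw [card_eq_sum_card_fiberwise (f := fun n => ⌊x n⌋) fun n hn => hK n (mem_filter.1 hn).1]
  refine sum_congr rfl fun k _ => ?_
  rw [filter_filter]
  congr 1
  refine filter_congr fun n _ => ?_
  constructor <;> rintro ⟨⟨h₁, h₂⟩, h⟩ <;> rw [Int.fract, h] at * <;>
    exact ⟨⟨by linarith, by linarith⟩, h⟩

lemma card_filter_mem_Icc_le_card_filter_floor_eq_add_one (hx : Set.InjOn x W) (hα : 0 ≤ α)
    (hβ : β ≤ 1) (k : ℤ) :
    #{n ∈ W | x n ∈ Set.Icc (k + α) (k + β)} ≤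
      #{n ∈ W | x n ∈ Set.Icc (k + α) (k + β) ∧ ⌊x n⌋ = k} + 1 := by
  rw [← filter_filter, ← card_filter_add_card_filter_not (fun n => ⌊x n⌋ = k)]
  gcongr
  -- an `x n` in `[k + α, k + β] ⊆ [k, k + 1]` has floor `k` unless `x n = k + 1`
  rw [card_le_one]
  intro n hn m hm
  simp only [mem_filter, Set.mem_Icc, Int.floor_eq_iff, not_and_or, not_le, not_lt] at hn hm
  refine hx hn.1.1 hm.1.1 ?_
  grind

lemma abs_card_filter_fract_mem_Icc_sub_sum_le (hx : Set.InjOn x W) (hα : 0 ≤ α) (hβ : β ≤ 1)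
    {K : Finset ℤ} (hK : ∀ n ∈ W, ⌊x n⌋ ∈ K) :
    |(#{n ∈ W | Int.fract (x n) ∈ Set.Icc α β} : ℝ) -
        ∑ k ∈ K, (#{n ∈ W | x n ∈ Set.Icc (k + α) (k + β)} : ℝ)| ≤ #K := by
  rw [card_filter_fract_mem_Icc_eq_sum W x hK, Nat.cast_sum, ← sum_sub_distrib]
  refine (abs_sum_le_sum_abs _ _).trans ?_
  rw [card_eq_sum_ones, Nat.cast_sum]
  refine sum_le_sum fun k _ => ?_
  have hle : (#{n ∈ W | x n ∈ Set.Icc (k + α) (k + β)} : ℝ) ≤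
      #{n ∈ W | x n ∈ Set.Icc (k + α) (k + β) ∧ ⌊x n⌋ = k} + 1 := by
    exact_mod_cast card_filter_mem_Icc_le_card_filter_floor_eq_add_one W x hx hα hβ k
  have hge : (#{n ∈ W | x n ∈ Set.Icc (k + α) (k + β) ∧ ⌊x n⌋ = k} : ℝ) ≤
      #{n ∈ W | x n ∈ Set.Icc (k + α) (k + β)} := by
    rw [← filter_filter]
    exact_mod_cast card_le_card (filter_subset _ _)
  rw [Nat.cast_one, abs_le]
  constructor <;> linarith

end FractDecomposition

lemma mul_add_mem_Icc_iff {a : ℝ} (ha : 0 < a) (γ r y z : ℝ) :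
    a * r + γ ∈ Set.Icc y z ↔ r ∈ Set.Icc ((y - γ) / a) ((z - γ) / a) := by
  simp only [Set.mem_Icc, div_le_iff₀ ha, le_div_iff₀ ha]
  constructor <;> rintro ⟨h₁, h₂⟩ <;> constructor <;> linarith

def intervalDefect (f : ℝ → ℝ) (α β y : ℝ) : ℝ :=
  f (y + β) - f (y + α) - (β - α) * (f (y + 1) - f y)

section IntervalDefect

variable {f : ℝ → ℝ} {α β : ℝ}

lemma abs_intervalDefect_le_of_monotone (hf : Monotone f) (hα : 0 ≤ α) (hαβ : α ≤ β)
    (hβ : β ≤ 1) (y : ℝ) : |intervalDefect f α β y| ≤ f (y + 1) - f y := by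
  have h₁ : f y ≤ f (y + α) := hf (by linarith)
  have h₂ : f (y + α) ≤ f (y + β) := hf (by linarith)
  have h₃ : f (y + β) ≤ f (y + 1) := hf (by linarith)
  have h₄ : (β - α) * (f (y + 1) - f y) ≤ f (y + 1) - f y :=
    mul_le_of_le_one_left (by linarith) (by linarith)
  have h₅ : 0 ≤ (β - α) * (f (y + 1) - f y) := mul_nonneg (by linarith) (by linarith)
  rw [intervalDefect, abs_le]
  constructor <;> linarith

lemma abs_intervalDefect_le_of_eqOn_sq {a γ y : ℝ} (ha : a ≠ 0) (hα : 0 ≤ α) (hαβ : α ≤ β)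
    (hβ : β ≤ 1) (hf : Set.EqOn f (fun z => ((z - γ) / a) ^ 2) (Set.Icc y (y + 1))) :
    |intervalDefect f α β y| ≤ 1 / a ^ 2 := by
  have hmem : ∀ c, 0 ≤ c → c ≤ 1 → y + c ∈ Set.Icc y (y + 1) := fun c h₀ h₁ =>
    ⟨by linarith, by linarith⟩
  have hdefect : intervalDefect f α β y = (β - α) * (α + β - 1) / a ^ 2 := by
    rw [intervalDefect, hf (hmem β (hα.trans hαβ) hβ), hf (hmem α hα (hαβ.trans hβ)),
      hf (hmem 1 zero_le_one le_rfl), hf ⟨le_rfl, by linarith⟩]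
    field_simp
    ring
  rw [hdefect, abs_div, abs_of_pos (show 0 < a ^ 2 by positivity), abs_mul]
  gcongr
  exact mul_le_one₀ (abs_le.2 ⟨by linarith, by linarith⟩) (abs_nonneg _)
    (abs_le.2 ⟨by linarith, by linarith⟩)

end IntervalDefect

noncomputable def smoothCount (a γ : ℝ) (M N : ℕ) (y : ℝ) : ℝ :=
  clampSq √M √N ((y - γ) / a)

section SmoothCount

variable {a : ℝ} (γ : ℝ) {M N : ℕ} {α β : ℝ}

lemma monotone_smoothCount (ha : 0 < a) : Monotone (smoothCount a γ M N) :=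
  (monotone_clampSq (Real.sqrt_nonneg _)).comp fun _ _ h => by gcongr

lemma smoothCount_add_one_sub_le (ha : 0 < a) (hMN : M ≤ N) (y : ℝ) :
    smoothCount a γ M N (y + 1) - smoothCount a γ M N y ≤ 2 * √N / a := by
  have h := clampSq_sub_le (Real.sqrt_nonneg M) (Real.sqrt_le_sqrt (Nat.cast_le.2 hMN))
    (w := (y - γ) / a) (w' := (y + 1 - γ) / a) (by gcongr; linarith)
  rw [smoothCount, smoothCount]
  convert h using 1
  field_simp
  ring

lemma abs_card_filter_mem_Icc_sub_smoothCount_le (ha : 0 < a) (hMN : M ≤ N) {y z : ℝ}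
    (hyz : y ≤ z) :
    |(#((Icc M N).filter fun n : ℕ => a * √(n : ℝ) + γ ∈ Set.Icc y z) : ℝ) -
        (smoothCount a γ M N z - smoothCount a γ M N y)| ≤ 1 := by
  simp only [mul_add_mem_Icc_iff ha, smoothCount]
  exact abs_card_filter_sqrt_mem_Icc_sub_le hMN (by gcongr)

lemma smoothCount_eqOn_sq (ha : 0 < a) {y : ℝ} (hy : a * √M + γ ≤ y)
    (hy' : y + 1 ≤ a * √N + γ) :
    Set.EqOn (smoothCount a γ M N) (fun z => ((z - γ) / a) ^ 2) (Set.Icc y (y + 1)) :=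
  fun z hz => by
    rw [smoothCount, clampSq_of_mem]
    · rw [le_div_iff₀ ha]; linarith [hz.1]
    · rw [div_le_iff₀ ha]; linarith [hz.2]

lemma sum_abs_intervalDefect_smoothCount_le (ha : 0 < a) (hMN : M ≤ N) (hα : 0 ≤ α)
    (hαβ : α ≤ β) (hβ : β ≤ 1) :
    ∑ k ∈ Icc ⌊a * √M + γ⌋ ⌊a * √N + γ⌋, |intervalDefect (smoothCount a γ M N) α β k| ≤
      #(Icc ⌊a * √M + γ⌋ ⌊a * √N + γ⌋) / a ^ 2 + 4 * √N / a := by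
  set k₀ := ⌊a * √M + γ⌋
  set k₁ := ⌊a * √N + γ⌋
  set K := Icc k₀ k₁
  rw [← sum_inter_add_sum_sdiff K {k₀, k₁}]
  have hboundary : ∑ k ∈ K ∩ {k₀, k₁}, |intervalDefect (smoothCount a γ M N) α β k| ≤
      4 * √N / a := by
    calc _ ≤ ∑ k ∈ K ∩ {k₀, k₁}, 2 * √N / a := sum_le_sum fun k _ =>
          (abs_intervalDefect_le_of_monotone (monotone_smoothCount γ ha) hα hαβ hβ k).trans
            (smoothCount_add_one_sub_le γ ha hMN k)
      _ = #(K ∩ {k₀, k₁}) * (2 * √N / a) := by rw [sum_const, nsmul_eq_mul]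
      _ ≤ 2 * (2 * √N / a) := by
          gcongr
          exact_mod_cast (card_le_card inter_subset_right).trans card_le_two
      _ = 4 * √N / a := by ring
  have hinterior : ∑ k ∈ K \ {k₀, k₁}, |intervalDefect (smoothCount a γ M N) α β k| ≤
      #K / a ^ 2 := by
    calc _ ≤ ∑ k ∈ K \ {k₀, k₁}, 1 / a ^ 2 := sum_le_sum fun k hk => by
          simp only [K, mem_sdiff, mem_Icc, mem_insert, mem_singleton, not_or] at hk
          have hk₀ : (k₀ : ℝ) + 1 ≤ k := by
            exact_mod_cast Int.add_one_le_iff.2 (lt_of_le_of_ne hk.1.1 (Ne.symm hk.2.1))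
          have hk₁ : (k : ℝ) + 1 ≤ k₁ := by
            exact_mod_cast Int.add_one_le_iff.2 (lt_of_le_of_ne hk.1.2 hk.2.2)
          exact abs_intervalDefect_le_of_eqOn_sq ha.ne' hα hαβ hβ (smoothCount_eqOn_sq γ ha
            (by linarith [Int.lt_floor_add_one (a * √M + γ)])
            (by linarith [Int.floor_le (a * √N + γ)]))
      _ ≤ ∑ k ∈ K, 1 / a ^ 2 :=
          sum_le_sum_of_subset_of_nonneg sdiff_subset fun _ _ _ => by positivity
      _ = #K / a ^ 2 := by rw [sum_const, nsmul_eq_mul]; ring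
  linarith

lemma sum_smoothCount_sub_eq (ha : 0 < a) (hMN : M ≤ N) :
    ∑ k ∈ Icc ⌊a * √M + γ⌋ ⌊a * √N + γ⌋,
        (smoothCount a γ M N (k + β) - smoothCount a γ M N (k + α)) =
      (β - α) * (N - M) +
        ∑ k ∈ Icc ⌊a * √M + γ⌋ ⌊a * √N + γ⌋, intervalDefect (smoothCount a γ M N) α β k := by
  have hst : √M ≤ √N := Real.sqrt_le_sqrt (Nat.cast_le.2 hMN)
  have hle : ⌊a * √M + γ⌋ ≤ ⌊a * √N + γ⌋ + 1 :=
    (Int.floor_le_floor (by gcongr)).trans (Int.le_add_one le_rfl)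
  have hbot : smoothCount a γ M N ⌊a * √M + γ⌋ = M := by
    rw [smoothCount, clampSq_of_le hst, Real.sq_sqrt (Nat.cast_nonneg _)]
    rw [div_le_iff₀ ha]
    linarith [Int.floor_le (a * √M + γ)]
  have htop : smoothCount a γ M N (⌊a * √N + γ⌋ + 1) = N := by
    rw [smoothCount, clampSq_of_ge hst, Real.sq_sqrt (Nat.cast_nonneg _)]
    rw [le_div_iff₀ ha]
    linarith [Int.lt_floor_add_one (a * √N + γ)]
  have htele : ∑ k ∈ Icc ⌊a * √M + γ⌋ ⌊a * √N + γ⌋,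
      (smoothCount a γ M N (k + 1) - smoothCount a γ M N k) = N - M := by
    have h := Int.sum_Icc_sub (fun k : ℤ => smoothCount a γ M N k) hle
    push_cast at h
    rw [h, htop, hbot]
  rw [← htele, mul_sum, ← sum_add_distrib]
  exact sum_congr rfl fun k _ => by rw [intervalDefect]; ring

lemma card_Icc_floor_le (ha : 0 < a) (hMN : M ≤ N) :
    (#(Icc ⌊a * √M + γ⌋ ⌊a * √N + γ⌋) : ℝ) ≤ a * (√N - √M) + 2 := by
  have hle : ⌊a * √M + γ⌋ ≤ ⌊a * √N + γ⌋ + 1 :=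
    (Int.floor_le_floor (by gcongr)).trans (Int.le_add_one le_rfl)
  have hcard : ((#(Icc ⌊a * √M + γ⌋ ⌊a * √N + γ⌋) : ℤ) : ℝ) =
      ⌊a * √N + γ⌋ + 1 - ⌊a * √M + γ⌋ := by
    rw [Int.card_Icc_of_le _ _ hle]; push_cast; ring
  rw [Int.cast_natCast] at hcard
  rw [hcard]
  linarith [Int.floor_le (a * √N + γ), Int.lt_floor_add_one (a * √M + γ)]

end SmoothCount

theorem abs_card_filter_fract_sqrt_mem_Icc_sub_le {a : ℝ} (γ : ℝ) (ha : 0 < a) {M N : ℕ}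
    (hMN : M ≤ N) {α β : ℝ} (hα : 0 ≤ α) (hαβ : α ≤ β) (hβ : β ≤ 1) :
    |(#((Icc M N).filter fun n : ℕ => Int.fract (a * √(n : ℝ) + γ) ∈ Set.Icc α β) : ℝ) -
        (β - α) * (N - M)| ≤ (2 + 1 / a ^ 2) * (a * (√N - √M) + 2) + 4 * √N / a := by
  set K := Icc ⌊a * √M + γ⌋ ⌊a * √N + γ⌋
  set G := smoothCount a γ M N
  have hK : ∀ n ∈ Icc M N, ⌊a * √(n : ℝ) + γ⌋ ∈ K := fun n hn => by
    rw [mem_Icc] at hn ⊢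
    exact ⟨Int.floor_le_floor (by gcongr; exact_mod_cast hn.1),
      Int.floor_le_floor (by gcongr; exact_mod_cast hn.2)⟩
  have hinj : Set.InjOn (fun n : ℕ => a * √(n : ℝ) + γ) (Icc M N) := fun n _ m _ h => by
    simpa [ha.ne', Real.sqrt_inj] using h
  have hfract := abs_card_filter_fract_mem_Icc_sub_sum_le (Icc M N) _ hinj hα hβ hK
  have hcount : |∑ k ∈ K, (#((Icc M N).filter fun n : ℕ => a * √(n : ℝ) + γ ∈
      Set.Icc (k + α) (k + β)) : ℝ) - ∑ k ∈ K, (G (k + β) - G (k + α))| ≤ #K := by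
    rw [← sum_sub_distrib, card_eq_sum_ones, Nat.cast_sum]
    refine (abs_sum_le_sum_abs _ _).trans (sum_le_sum fun k _ => ?_)
    exact_mod_cast abs_card_filter_mem_Icc_sub_smoothCount_le γ ha hMN (by linarith)
  have hdefect : |∑ k ∈ K, intervalDefect G α β k| ≤ #K / a ^ 2 + 4 * √N / a :=
    (abs_sum_le_sum_abs _ _).trans
      (sum_abs_intervalDefect_smoothCount_le γ ha hMN hα hαβ hβ)
  have hcard : (2 + 1 / a ^ 2) * #K ≤ (2 + 1 / a ^ 2) * (a * (√N - √M) + 2) :=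
    mul_le_mul_of_nonneg_left (card_Icc_floor_le γ ha hMN) (by positivity)
  have hsplit : ∑ k ∈ K, (G (k + β) - G (k + α)) =
      (β - α) * (N - M) + ∑ k ∈ K, intervalDefect G α β k :=
    sum_smoothCount_sub_eq γ ha hMN
  have hexpand : (2 + 1 / a ^ 2) * #K = 2 * #K + #K / a ^ 2 := by ring
  rw [abs_le] at hfract hcount hdefect ⊢
  constructor <;> linarith

lemma filter_Icc_one_half_le_eq {N : ℕ} (hN : 1 ≤ N) :
    (Icc 1 N).filter (fun n : ℕ => (N : ℝ) / 2 ≤ n) = Icc ((N + 1) / 2) N := by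
  ext n
  have hcast : (N : ℝ) / 2 ≤ n ↔ N ≤ 2 * n := by
    rw [div_le_iff₀ two_pos, mul_comm]
    norm_cast
  simp only [mem_filter, mem_Icc, hcast]
  omega

lemma abs_mul_sub_div_two_le_half {θ : ℝ} (hθ₀ : 0 ≤ θ) (hθ₁ : θ ≤ 1) (N : ℕ) :
    |θ * ((N : ℝ) - ((N + 1) / 2 : ℕ)) - θ * N / 2| ≤ 1 / 2 := by
  have h₁ : (N : ℝ) ≤ 2 * ((N + 1) / 2 : ℕ) := by exact_mod_cast (by omega : N ≤ 2 * ((N + 1) / 2))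
  have h₂ : 2 * (((N + 1) / 2 : ℕ) : ℝ) ≤ N + 1 := by
    exact_mod_cast (by omega : 2 * ((N + 1) / 2) ≤ N + 1)
  rw [abs_le]
  constructor <;> nlinarith

/-- Quantitative Fejér: for `a > 0`, `γ ∈ ℝ` there is `c = c(a,γ) > 0` such that for all
`N ≥ 1` and intervals `[α,β] ⊆ [0,1]`,
`|#{n ∈ [N/2,N] : ((a√n+γ)) ∈ [α,β]} − (β−α)N/2| ≤ c√N`. -/
theorem stmt6 (a γ : ℝ) (ha : 0 < a) :
    ∃ c : ℝ, 0 < c ∧ ∀ N : ℕ, 1 ≤ N → ∀ α β : ℝ, 0 ≤ α → α ≤ β → β ≤ 1 →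
      |(((Finset.Icc 1 N).filter fun n : ℕ =>
          (N : ℝ) / 2 ≤ n ∧ Int.fract (a * Real.sqrt n + γ) ∈ Set.Icc α β).card : ℝ)
        - (β - α) * N / 2| ≤ c * Real.sqrt N := by
  refine ⟨(2 + 1 / a ^ 2) * (a + 2) + 4 / a + 1, by positivity, ?_⟩
  intro N hN α β hα hαβ hβ
  rw [← filter_filter, filter_Icc_one_half_le_eq hN]
  set M := (N + 1) / 2
  have hmain := abs_card_filter_fract_sqrt_mem_Icc_sub_le γ ha (M := M) (N := N) (by omega)
    hα hαβ hβ
  have hhalf := abs_mul_sub_div_two_le_half (θ := β - α) (by linarith) (by linarith) N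
  have hsqrtN : 1 ≤ √(N : ℝ) := Real.one_le_sqrt.2 (by exact_mod_cast hN)
  have hlen : (2 + 1 / a ^ 2) * (a * (√N - √M) + 2) ≤ (2 + 1 / a ^ 2) * ((a + 2) * √N) :=
    mul_le_mul_of_nonneg_left (by nlinarith [Real.sqrt_nonneg M]) (by positivity)
  calc _ ≤ _ := abs_sub_le _ ((β - α) * ((N : ℝ) - M)) _
    _ ≤ (2 + 1 / a ^ 2) * (a * (√N - √M) + 2) + 4 * √N / a + 1 / 2 := add_le_add hmain hhalf
    _ ≤ ((2 + 1 / a ^ 2) * (a + 2) + 4 / a + 1) * √N := by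
      have hc : ((2 + 1 / a ^ 2) * (a + 2) + 4 / a + 1) * √N =
          (2 + 1 / a ^ 2) * ((a + 2) * √N) + 4 * √N / a + √N := by ring
      linarith
end

section
/- Fix g > 0 and δ ∈ (0, 1/4). The number of natural numbers n ∈ [N/2, N] with |cos(4g√n − π/4)| ≤ N^{−1/4+δ} is O(N^{3/4+δ}) as N → ∞. -/
/-!
If `|cos θ| ≤ ε`, then `θ` lies within `πε/2` of a zero `(k + 1/2)π` of `cos` (Jordan's
inequality). For `n ≤ N` the phase `4g√n - π/4` meets only `O(√N)` such zeros, and the `n`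
attached to a single zero have `√n` in an interval of length `O(ε)`, hence `n` in an interval of
length `O(ε√N)`. So the count is `O(√N (ε√N + 1))`, which is `O(N^{3/4+δ})` for
`ε = N^{-1/4+δ}`.
-/

open Real Finset

noncomputable def cosZeroIndex (θ : ℝ) : ℤ := round (θ / π - 1 / 2)

lemma cosZeroIndex_mono : Monotone cosZeroIndex := fun x y h => by
  unfold cosZeroIndex
  rw [round_eq, round_eq]
  gcongr

lemma abs_sub_cosZeroIndex_le (θ : ℝ) :
    |θ - (cosZeroIndex θ + 1 / 2) * π| ≤ π / 2 * |cos θ| := by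
  set r := θ - (cosZeroIndex θ + 1 / 2) * π
  have hr : |r| ≤ π / 2 := by
    have hr_eq : r = (θ / π - 1 / 2 - cosZeroIndex θ) * π := by
      field_simp [r]
      ring
    rw [hr_eq, abs_mul, abs_of_pos pi_pos]
    calc _ ≤ 1 / 2 * π := by gcongr; exact abs_sub_round _
      _ = π / 2 := by ring
  have hcos : |cos θ| = |sin r| := by
    rw [show θ = r + (cosZeroIndex θ : ℝ) * π + π / 2 by ring, cos_add_pi_div_two, abs_neg,
      sin_add_int_mul_pi, abs_mul, abs_neg_one_zpow, one_mul]
  rw [hcos]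
  calc |r| = π / 2 * (2 / π * |r|) := by field_simp
    _ ≤ π / 2 * |sin r| := by gcongr; exact mul_abs_le_abs_sin hr

lemma card_Icc_cosZeroIndex_le {θ₀ θ₁ : ℝ} (h : θ₀ ≤ θ₁) :
    (#(Icc (cosZeroIndex θ₀) (cosZeroIndex θ₁)) : ℝ) ≤ (θ₁ - θ₀) / π + 2 := by
  have hle := cosZeroIndex_mono h
  have hcard : (#(Icc (cosZeroIndex θ₀) (cosZeroIndex θ₁)) : ℝ)
      = ((cosZeroIndex θ₁ + 1 - cosZeroIndex θ₀ : ℤ) : ℝ) := by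
    exact_mod_cast Int.card_Icc_of_le (a := cosZeroIndex θ₀) (b := cosZeroIndex θ₁) (by omega)
  rw [hcard]
  push_cast
  unfold cosZeroIndex
  have := round_le_add_half (θ₁ / π - 1 / 2)
  have := sub_half_lt_round (θ₀ / π - 1 / 2)
  rw [sub_div]
  linarith

lemma card_le_of_forall_sub_le {s : Finset ℕ} {L : ℝ} (hL : 0 ≤ L)
    (h : ∀ m ∈ s, ∀ n ∈ s, (n : ℝ) - m ≤ L) : (#s : ℝ) ≤ L + 1 := by
  rcases s.eq_empty_or_nonempty with rfl | hs
  · simp only [card_empty, Nat.cast_zero]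
    linarith
  set m := s.min' hs
  have hsub : s ⊆ Icc m (m + ⌊L⌋₊) := fun n hn => by
    have hmn := s.min'_le n hn
    have : n - m ≤ ⌊L⌋₊ :=
      Nat.le_floor (by rw [Nat.cast_sub hmn]; exact h m (s.min'_mem hs) n hn)
    exact mem_Icc.2 ⟨hmn, by omega⟩
  calc (#s : ℝ) ≤ #(Icc m (m + ⌊L⌋₊)) := by exact_mod_cast card_le_card hsub
    _ = ⌊L⌋₊ + 1 := by rw [Nat.card_Icc, add_assoc, Nat.add_sub_cancel_left]; push_cast; rfl
    _ ≤ L + 1 := by gcongr; exact Nat.floor_le hL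

lemma card_le_of_abs_mul_sqrt_sub_le {a c r : ℝ} (ha : 0 < a) (hr : 0 ≤ r) {N : ℕ}
    {s : Finset ℕ} (hN : ∀ n ∈ s, n ≤ N) (hs : ∀ n ∈ s, |a * √n - c| ≤ r) :
    (#s : ℝ) ≤ 4 * r * √N / a + 1 := by
  refine card_le_of_forall_sub_le (by positivity) fun m hm n hn => ?_
  have hdiff : √n - √m ≤ 2 * r / a := by
    rw [le_div_iff₀ ha]
    linarith [(abs_sub_le_iff.1 (hs n hn)).1, (abs_sub_le_iff.1 (hs m hm)).2]
  have hsum : √n + √m ≤ 2 * √N := by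
    have := sqrt_le_sqrt (Nat.cast_le.2 (hN n hn) : (n : ℝ) ≤ N)
    have := sqrt_le_sqrt (Nat.cast_le.2 (hN m hm) : (m : ℝ) ≤ N)
    linarith
  calc (n : ℝ) - m = (√n - √m) * (√n + √m) := by
        linear_combination mul_self_sqrt (m.cast_nonneg : (0 : ℝ) ≤ m)
          - mul_self_sqrt (n.cast_nonneg : (0 : ℝ) ≤ n)
    _ ≤ 2 * r / a * (2 * √N) := by gcongr
    _ = 4 * r * √N / a := by ring

lemma card_le_of_abs_cos_le {a c ε : ℝ} (ha : 0 < a) (hε : 0 ≤ ε) {N : ℕ} {s : Finset ℕ}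
    (hN : ∀ n ∈ s, n ≤ N) (hs : ∀ n ∈ s, |cos (a * √n + c)| ≤ ε) :
    (#s : ℝ) ≤ (2 * π * ε * √N / a + 1) * (a * √N / π + 2) := by
  set k : ℕ → ℤ := fun n => cosZeroIndex (a * √n + c)
  set K := Icc (cosZeroIndex c) (cosZeroIndex (a * √N + c))
  have hk : ∀ n ∈ s, k n ∈ K := fun n hn => mem_Icc.2
    ⟨cosZeroIndex_mono (le_add_of_nonneg_left (by positivity)),
      cosZeroIndex_mono (by gcongr; exact_mod_cast hN n hn)⟩
  have hfiber : ∀ j ∈ K, (#{n ∈ s | k n = j} : ℝ) ≤ 2 * π * ε * √N / a + 1 := by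
    intro j _
    have hnear : ∀ n ∈ {n ∈ s | k n = j}, |a * √n - ((j + 1 / 2) * π - c)| ≤ π / 2 * ε := by
      intro n hn
      obtain ⟨hns, rfl⟩ := mem_filter.1 hn
      calc |a * √n - ((k n + 1 / 2) * π - c)|
          = |a * √n + c - (cosZeroIndex (a * √n + c) + 1 / 2) * π| := by congr 1; ring
        _ ≤ π / 2 * |cos (a * √n + c)| := abs_sub_cosZeroIndex_le _
        _ ≤ π / 2 * ε := by gcongr; exact hs n hns
    convert card_le_of_abs_mul_sqrt_sub_le ha (by positivity)
      (fun n hn => hN n (mem_filter.1 hn).1) hnear using 2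
    ring
  have hB : (0 : ℝ) ≤ 2 * π * ε * √N / a + 1 := by positivity
  have hpigeon := card_le_mul_card_image_of_maps_to hk _ fun j hj => Nat.le_floor (hfiber j hj)
  calc (#s : ℝ) ≤ ⌊2 * π * ε * √N / a + 1⌋₊ * #K := by exact_mod_cast hpigeon
    _ ≤ (2 * π * ε * √N / a + 1) * #K := by gcongr; exact Nat.floor_le hB
    _ ≤ (2 * π * ε * √N / a + 1) * (a * √N / π + 2) := by
        gcongr
        simpa only [add_sub_cancel_right] using
          card_Icc_cosZeroIndex_le (le_add_of_nonneg_left (by positivity) : c ≤ a * √N + c)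

open scoped Classical

/-- For `g > 0`, `δ ∈ (0,1/4)`, the number of `n ∈ [N/2, N]` with
`|cos(4g√n − π/4)| ≤ N^{−1/4+δ}` is `O(N^{3/4+δ})`. -/
theorem stmt7 (g δ : ℝ) (hg : 0 < g) (hδ : δ ∈ Set.Ioo (0 : ℝ) (1/4)) :
    ∃ C : ℝ, 0 < C ∧ ∀ N : ℕ, 1 ≤ N →
      (((Finset.Icc 1 N).filter fun n : ℕ =>
          (N : ℝ) / 2 ≤ n ∧
          |Real.cos (4 * g * Real.sqrt n - Real.pi / 4)| ≤ (N : ℝ) ^ (-(1/4 : ℝ) + δ)).card : ℝ)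
        ≤ C * (N : ℝ) ^ ((3/4 : ℝ) + δ) := by
  obtain ⟨hδ, -⟩ := hδ
  refine ⟨(2 * π / (4 * g) + 1) * (4 * g / π + 2), by positivity, fun N hN => ?_⟩
  have hN0 : (0 : ℝ) < N := by exact_mod_cast hN
  have hsqrtN : 1 ≤ √N := one_le_sqrt.2 (by exact_mod_cast hN)
  have hX : 1 ≤ (N : ℝ) ^ ((1/4 : ℝ) + δ) := one_le_rpow (by exact_mod_cast hN) (by linarith)
  have hεX : (N : ℝ) ^ (-(1/4 : ℝ) + δ) * √N = N ^ ((1/4 : ℝ) + δ) := by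
    rw [sqrt_eq_rpow, ← rpow_add hN0]
    ring_nf
  have hXN : (N : ℝ) ^ ((1/4 : ℝ) + δ) * √N = N ^ ((3/4 : ℝ) + δ) := by
    rw [sqrt_eq_rpow, ← rpow_add hN0]
    ring_nf
  set ε := (N : ℝ) ^ (-(1/4 : ℝ) + δ)
  set X := (N : ℝ) ^ ((1/4 : ℝ) + δ)
  have hcount := card_le_of_abs_cos_le (a := 4 * g) (c := -(π / 4)) (ε := ε) (N := N)
    (s := {n ∈ Icc 1 N | (N : ℝ) / 2 ≤ n ∧ |cos (4 * g * √n - π / 4)| ≤ ε})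
    (by positivity) (by positivity) (fun n hn => (mem_Icc.1 (mem_filter.1 hn).1).2)
    (fun n hn => by simpa only [← sub_eq_add_neg] using (mem_filter.1 hn).2.2)
  calc _ ≤ (2 * π * ε * √N / (4 * g) + 1) * (4 * g * √N / π + 2) := hcount
    _ = (2 * π / (4 * g) * X + 1) * (4 * g / π * √N + 2) := by rw [← hεX]; ring
    _ ≤ ((2 * π / (4 * g) + 1) * X) * ((4 * g / π + 2) * √N) := by gcongr <;> nlinarith
    _ = _ := by rw [← hXN]; ring
end

section
/- Let C > 0, a > 0, γ ∈ ℝ, and let [α, β] ⊆ (−C, C). Then (1/N)·#{n ≤ N : C·cos(2π(a√n + γ)) ∈ [α, β]} → ∫_α^β dy/(π√(C² − y²)) as N → ∞. -/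
/-!
Write `x n = a √n + γ`. For an integer `k`, the `n` with `x n ∈ [k + p, k + q]` form the integer
points of `[((k + p - γ) / a)², ((k + q - γ) / a)²]`, an interval of length
`(q - p) (2k + p + q - 2γ) / a²` up to an error of at most one. Summing over the `k ≤ x N`
(about `a √N` of them) gives `(q - p) N + O(√N)` points `n ≤ N` with `fract (x n) ∈ [p, q]`,
so `fract (x n)` is equidistributed. On a period, `C cos (2π t) ∈ [α, β]` means that `t` lies
in one of two intervals of total length `(arccos (α / C) - arccos (β / C)) / π`, which is the
arcsine integral.
-/

open Finset Filter Function Real Topology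

theorem Nat.abs_card_Icc_ceil_floor_sub_le {A B : ℝ} (hA : 0 ≤ A) (hAB : A ≤ B) :
    |(#(Icc ⌈A⌉₊ ⌊B⌋₊) : ℝ) - (B - A)| ≤ 1 := by
  have hceil : ⌈A⌉₊ ≤ ⌊B⌋₊ + 1 :=
    (Nat.ceil_le_floor_add_one A).trans (by gcongr)
  rw [Nat.card_Icc, Nat.cast_sub hceil, abs_le]
  have := Nat.floor_le (hA.trans hAB)
  have := Nat.sub_one_lt_floor B
  have := Nat.le_ceil A
  have := Nat.ceil_lt_add_one hA
  push_cast
  constructor <;> linarith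

theorem Int.fract_eq_sub_natFloor {x : ℝ} (hx : 0 ≤ x) : Int.fract x = x - ⌊x⌋₊ := by
  rw [natCast_floor_eq_intCast_floor hx, Int.self_sub_floor]

noncomputable def sqrtFiber (a γ p q : ℝ) (k : ℕ) : Finset ℕ :=
  Icc ⌈((k + p - γ) / a) ^ 2⌉₊ ⌊((k + q - γ) / a) ^ 2⌋₊

section SqrtFiber

variable {a γ p q : ℝ}

theorem le_mul_sqrt_add_iff (ha : 0 < a) {s x : ℝ} (hs : γ ≤ s) (hx : 0 ≤ x) :
    s ≤ a * √x + γ ↔ ((s - γ) / a) ^ 2 ≤ x := by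
  rw [← Real.le_sqrt (div_nonneg (sub_nonneg.2 hs) ha.le) hx, div_le_iff₀ ha]
  constructor <;> intro h <;> linarith

theorem mul_sqrt_add_le_iff (ha : 0 < a) {t x : ℝ} (ht : γ ≤ t) :
    a * √x + γ ≤ t ↔ x ≤ ((t - γ) / a) ^ 2 := by
  rw [← Real.sqrt_le_left (div_nonneg (sub_nonneg.2 ht) ha.le), le_div_iff₀ ha]
  constructor <;> intro h <;> linarith

theorem mem_sqrtFiber (ha : 0 < a) (hγ : γ ≤ p) (hpq : p ≤ q) {k n : ℕ} :
    n ∈ sqrtFiber a γ p q k ↔ k + p ≤ a * √n + γ ∧ a * √n + γ ≤ k + q := by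
  have hk : γ ≤ k + p := by linarith [(k.cast_nonneg : (0 : ℝ) ≤ k)]
  rw [sqrtFiber, mem_Icc, Nat.ceil_le, Nat.le_floor_iff (sq_nonneg _),
    le_mul_sqrt_add_iff ha hk n.cast_nonneg, mul_sqrt_add_le_iff ha (by linarith)]

theorem abs_card_sqrtFiber_sub_le (ha : 0 < a) (hγ : γ ≤ p) (hpq : p ≤ q) (k : ℕ) :
    |(#(sqrtFiber a γ p q k) : ℝ) - (((k + q - γ) / a) ^ 2 - ((k + p - γ) / a) ^ 2)| ≤ 1 := by
  have hk : 0 ≤ (k + p - γ) / a := div_nonneg (by linarith [(k.cast_nonneg : (0 : ℝ) ≤ k)]) ha.le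
  exact Nat.abs_card_Icc_ceil_floor_sub_le (sq_nonneg _) (by gcongr)

theorem sum_range_sq_sub_sq (M : ℕ) :
    ∑ k ∈ range M, (((k + q - γ) / a) ^ 2 - ((k + p - γ) / a) ^ 2) =
      (q - p) * M * (M + p + q - 1 - 2 * γ) / a ^ 2 := by
  induction M with
  | zero => simp
  | succ M ih =>
    rw [sum_range_succ, ih]
    push_cast
    ring

theorem tendsto_sum_card_sqrtFiber_div_sq (ha : 0 < a) (hγ : γ ≤ p) (hpq : p ≤ q) :
    Tendsto (fun M : ℕ => (∑ k ∈ range M, #(sqrtFiber a γ p q k) : ℝ) / M ^ 2) atTop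
      (𝓝 ((q - p) / a ^ 2)) := by
  set main : ℕ → ℝ := fun M => (q - p) * M * (M + p + q - 1 - 2 * γ) / a ^ 2
  have hbound (M : ℕ) : |(∑ k ∈ range M, #(sqrtFiber a γ p q k) : ℝ) - main M| ≤ M := by
    rw [show main M = _ from (sum_range_sq_sub_sq M).symm, ← sum_sub_distrib]
    refine (abs_sum_le_sum_abs _ _).trans ?_
    simpa using sum_le_sum (s := range M) fun k _ => abs_card_sqrtFiber_sub_le ha hγ hpq k
  have hmain : Tendsto (fun M : ℕ => main M / M ^ 2) atTop (𝓝 ((q - p) / a ^ 2)) := by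
    have h := (tendsto_inv_atTop_nhds_zero_nat (𝕜 := ℝ)).const_mul (p + q - 1 - 2 * γ)
      |>.const_add 1 |>.const_mul ((q - p) / a ^ 2)
    rw [mul_zero, add_zero, mul_one] at h
    refine h.congr' ?_
    filter_upwards [eventually_gt_atTop 0] with M hM
    simp only [main]
    field_simp
    ring
  have herr : Tendsto (fun M : ℕ => ((∑ k ∈ range M, #(sqrtFiber a γ p q k) : ℝ) - main M) / M ^ 2)
      atTop (𝓝 0) := by
    refine squeeze_zero_norm' ?_ tendsto_inv_atTop_nhds_zero_nat
    filter_upwards [eventually_gt_atTop 0] with M hM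
    rw [norm_div, Real.norm_eq_abs, norm_pow, Real.norm_natCast, div_le_iff₀ (by positivity)]
    calc _ ≤ (M : ℝ) := hbound M
      _ = (M : ℝ)⁻¹ * M ^ 2 := by field_simp
  simpa using (hmain.add herr).congr fun M => by ring

theorem pairwise_disjoint_sqrtFiber (ha : 0 < a) (hγ : γ ≤ p) (hpq : p ≤ q) (hqp : q < p + 1) :
    Pairwise (Disjoint on sqrtFiber a γ p q) := by
  intro k l hne
  refine disjoint_left.2 fun n hnk hnl => hne ?_
  rw [mem_sqrtFiber ha hγ hpq] at hnk hnl
  have hkl : (k : ℝ) < l + 1 := by linarith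
  have hlk : (l : ℝ) < k + 1 := by linarith
  norm_cast at hkl hlk
  omega

theorem sum_card_sqrtFiber_le_card (ha : 0 < a) (hγ : γ < p) (hp : 0 ≤ p) (hpq : p ≤ q)
    (hq : q < 1) (N : ℕ) :
    ∑ k ∈ range ⌊a * √N + γ⌋₊, #(sqrtFiber a γ p q k) ≤
      #((Icc 1 N).filter fun n : ℕ => Int.fract (a * √n + γ) ∈ Set.Icc p q) := by
  rw [← card_biUnion ((pairwise_disjoint_sqrtFiber ha hγ.le hpq (by linarith)).set_pairwise _)]
  refine card_le_card fun n hn => ?_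
  obtain ⟨k, hkK, hnk⟩ := mem_biUnion.1 hn
  rw [mem_range] at hkK
  rw [mem_sqrtFiber ha hγ.le hpq] at hnk
  have hk : (0 : ℝ) ≤ k := k.cast_nonneg
  have hfloor : ⌊a * √n + γ⌋₊ = k :=
    (Nat.floor_eq_iff (by linarith)).2 ⟨by linarith, by linarith⟩
  have hn0 : 0 < n := by
    by_contra! h
    simp only [Nat.le_zero.1 h, CharP.cast_eq_zero, Real.sqrt_zero, mul_zero, zero_add] at hnk
    linarith
  have hnN : n ≤ N := by
    have hK : (k : ℝ) + 1 ≤ ⌊a * √N + γ⌋₊ := by exact_mod_cast hkK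
    have hxN := Nat.floor_le (zero_le_one.trans (Nat.floor_pos.1 (k.zero_le.trans_lt hkK)))
    have : √(n : ℝ) < √N := by nlinarith
    exact_mod_cast ((Real.sqrt_lt_sqrt_iff n.cast_nonneg).1 this).le
  rw [mem_filter, mem_Icc, Int.fract_eq_sub_natFloor (by linarith), hfloor, Set.mem_Icc]
  exact ⟨⟨hn0, hnN⟩, by linarith, by linarith⟩

theorem exists_card_le_add_sum_card_sqrtFiber (ha : 0 < a) (hγ : γ ≤ p) (hpq : p ≤ q) :
    ∃ J : ℕ, ∀ N : ℕ, #((Icc 1 N).filter fun n : ℕ => Int.fract (a * √n + γ) ∈ Set.Icc p q) ≤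
      J + ∑ k ∈ range (⌊a * √N + γ⌋₊ + 1), #(sqrtFiber a γ p q k) := by
  -- the `n` with `a √n + γ < 0` lie below `((0 - γ) / a) ^ 2`
  refine ⟨⌊((0 - γ) / a) ^ 2⌋₊ + 1, fun N => ?_⟩
  rw [← card_range (⌊((0 - γ) / a) ^ 2⌋₊ + 1)]
  refine (card_le_card ?_).trans ((card_union_le _ _).trans (add_le_add_right card_biUnion_le _))
  intro n hn
  rw [mem_filter, mem_Icc] at hn
  obtain ⟨⟨-, hnN⟩, hfract⟩ := hn
  rw [mem_union, mem_range, mem_biUnion]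
  rcases lt_or_ge (a * √n + γ) 0 with hneg | hnonneg
  · have hγ0 : γ ≤ 0 := by nlinarith [Real.sqrt_nonneg n]
    exact Or.inl (Nat.lt_succ_of_le (Nat.le_floor ((mul_sqrt_add_le_iff ha hγ0).1 hneg.le)))
  · refine Or.inr ⟨⌊a * √n + γ⌋₊, mem_range.2 (Nat.lt_succ_of_le (Nat.floor_le_floor ?_)), ?_⟩
    · gcongr
    rw [mem_sqrtFiber ha hγ hpq]
    rw [Int.fract_eq_sub_natFloor hnonneg, Set.mem_Icc] at hfract
    constructor <;> linarith

end SqrtFiber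

theorem tendsto_comp_div_of_tendsto_div_sq {u : ℕ → ℝ} {L b : ℝ}
    (hu : Tendsto (fun M : ℕ => u M / M ^ 2) atTop (𝓝 L)) {k : ℕ → ℕ} (hb : 0 < b)
    (hk : Tendsto (fun N : ℕ => (k N : ℝ) / √N) atTop (𝓝 b)) :
    Tendsto (fun N : ℕ => u (k N) / N) atTop (𝓝 (L * b ^ 2)) := by
  have hsqrt : Tendsto (fun N : ℕ => √(N : ℝ)) atTop atTop :=
    tendsto_sqrt_atTop.comp tendsto_natCast_atTop_atTop
  have hk_top : Tendsto k atTop atTop := by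
    refine tendsto_natCast_atTop_iff.1 ((hk.pos_mul_atTop hb hsqrt).congr' ?_)
    filter_upwards [eventually_gt_atTop 0] with N hN
    field_simp
  refine ((hu.comp hk_top).mul (hk.pow 2)).congr' ?_
  filter_upwards [hk_top.eventually_gt_atTop 0] with N hN
  simp only [Function.comp_apply, div_pow, Real.sq_sqrt N.cast_nonneg]
  field_simp

theorem tendsto_floor_mul_sqrt_add_add_div_sqrt {a : ℝ} (ha : 0 < a) (γ : ℝ) (e : ℕ) :
    Tendsto (fun N : ℕ => ((⌊a * √N + γ⌋₊ + e : ℕ) : ℝ) / √N) atTop (𝓝 a) := by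
  have hsqrt : Tendsto (fun N : ℕ => √(N : ℝ)) atTop atTop :=
    tendsto_sqrt_atTop.comp tendsto_natCast_atTop_atTop
  have hlim (c : ℝ) : Tendsto (fun N : ℕ => a + c / √N) atTop (𝓝 a) := by
    simpa using tendsto_const_nhds.add (tendsto_const_nhds.div_atTop hsqrt)
  refine tendsto_of_tendsto_of_tendsto_of_le_of_le' (hlim (γ - 1)) (hlim (γ + e)) ?_ ?_
  all_goals
    filter_upwards [eventually_gt_atTop 0, (hsqrt.const_mul_atTop ha).eventually_ge_atTop (-γ)]
      with N hN hγN
    have hsqrtN : 0 < √(N : ℝ) := Real.sqrt_pos.2 (Nat.cast_pos.2 hN)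
    rw [add_div' _ _ _ hsqrtN.ne', div_le_div_iff_of_pos_right hsqrtN]
  · have := Nat.sub_one_lt_floor (a * √N + γ)
    push_cast
    linarith [(e.cast_nonneg : (0 : ℝ) ≤ e)]
  · have := Nat.floor_le (show 0 ≤ a * √N + γ by linarith)
    push_cast
    linarith

theorem tendsto_card_fract_mem_Icc_div_of_lt {a γ p q : ℝ} (ha : 0 < a) (hγ : γ < p) (hp : 0 ≤ p)
    (hpq : p ≤ q) (hq : q < 1) :
    Tendsto (fun N : ℕ =>
      (#((Icc 1 N).filter fun n : ℕ => Int.fract (a * √n + γ) ∈ Set.Icc p q) : ℝ) / N)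
      atTop (𝓝 (q - p)) := by
  have hS (e : ℕ) : Tendsto (fun N : ℕ =>
      (∑ k ∈ range (⌊a * √N + γ⌋₊ + e), #(sqrtFiber a γ p q k) : ℝ) / N) atTop (𝓝 (q - p)) := by
    convert tendsto_comp_div_of_tendsto_div_sq (tendsto_sum_card_sqrtFiber_div_sq ha hγ.le hpq) ha
      (tendsto_floor_mul_sqrt_add_add_div_sqrt ha γ e) using 2
    field_simp
  obtain ⟨J, hJ⟩ := exists_card_le_add_sum_card_sqrtFiber ha hγ.le hpq
  have hupper := (tendsto_const_div_atTop_nhds_zero_nat (J : ℝ)).add (hS 1)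
  rw [zero_add] at hupper
  refine tendsto_of_tendsto_of_tendsto_of_le_of_le (by simpa using hS 0) hupper (fun N => ?_)
    (fun N => ?_)
  · dsimp only
    gcongr
    exact_mod_cast sum_card_sqrtFiber_le_card ha hγ hp hpq hq N
  · refine (div_le_div_of_nonneg_right (Nat.cast_le.2 (hJ N)) N.cast_nonneg).trans_eq ?_
    push_cast
    ring

theorem tendsto_card_fract_mem_Icc_div {a p q : ℝ} (ha : 0 < a) (γ : ℝ) (hp : 0 ≤ p)
    (hpq : p ≤ q) (hq : q < 1) :
    Tendsto (fun N : ℕ =>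
      (#((Icc 1 N).filter fun n : ℕ => Int.fract (a * √n + γ) ∈ Set.Icc p q) : ℝ) / N)
      atTop (𝓝 (q - p)) := by
  have hshift : γ - (⌈γ⌉₊ + 1 : ℕ) < p := by
    push_cast
    linarith [Nat.le_ceil γ]
  convert tendsto_card_fract_mem_Icc_div_of_lt ha hshift hp hpq hq using 6 with N n
  rw [← add_sub_assoc, Int.fract_sub_natCast]

theorem cos_mem_Icc_iff_mem_Icc_arccos {θ u v : ℝ} (hθ : θ ∈ Set.Icc 0 π)
    (hu : u ∈ Set.Icc (-1) 1) (hv : v ∈ Set.Icc (-1) 1) :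
    cos θ ∈ Set.Icc u v ↔ θ ∈ Set.Icc (arccos v) (arccos u) := by
  have harccos (x : ℝ) : arccos x ∈ Set.Icc 0 π := ⟨arccos_nonneg x, arccos_le_pi x⟩
  rw [Set.mem_Icc, Set.mem_Icc, ← cos_arccos hu.1 hu.2, ← cos_arccos hv.1 hv.2,
    strictAntiOn_cos.le_iff_ge (harccos u) hθ, strictAntiOn_cos.le_iff_ge hθ (harccos v),
    cos_arccos hu.1 hu.2, cos_arccos hv.1 hv.2, and_comm]

theorem cos_two_pi_mul_mem_Icc_iff {u v : ℝ} (hu : u ∈ Set.Icc (-1) 1)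
    (hv : v ∈ Set.Icc (-1) 1) (y : ℝ) :
    cos (2 * π * y) ∈ Set.Icc u v ↔
      Int.fract y ∈ Set.Icc (arccos v / (2 * π)) (arccos u / (2 * π)) ∨
        Int.fract y ∈ Set.Icc (1 - arccos u / (2 * π)) (1 - arccos v / (2 * π)) := by
  have hhalf (z : ℝ) (hz₀ : 0 ≤ z) (hz : z ≤ 1 / 2) :
      cos (2 * π * z) ∈ Set.Icc u v ↔ z ∈ Set.Icc (arccos v / (2 * π)) (arccos u / (2 * π)) := by
    rw [cos_mem_Icc_iff_mem_Icc_arccos ⟨by positivity, by nlinarith [pi_pos]⟩ hu hv,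
      Set.mem_Icc, Set.mem_Icc, div_le_iff₀ (by positivity), le_div_iff₀ (by positivity),
      mul_comm z]
  have ht₂ : arccos u / (2 * π) ≤ 1 / 2 := by
    rw [div_le_iff₀ (by positivity)]
    linarith [arccos_le_pi u]
  have ht₁ : 0 ≤ arccos v / (2 * π) := by have := arccos_nonneg v; positivity
  have hperiodic : cos (2 * π * y) = cos (2 * π * Int.fract y) := by
    rw [← Int.fract_add_floor y, mul_add, mul_comm _ (⌊y⌋ : ℝ), cos_add_int_mul_two_pi,
      Int.fract_add_floor]
  rw [hperiodic]
  rcases le_or_gt (Int.fract y) (1 / 2) with hy | hy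
  · rw [hhalf _ (Int.fract_nonneg y) hy]
    simp only [Set.mem_Icc]
    grind
  · rw [← cos_two_pi_sub, ← mul_one_sub, hhalf _ (by linarith [Int.fract_lt_one y]) (by linarith)]
    simp only [Set.mem_Icc]
    grind

theorem integral_one_div_pi_mul_sqrt_sq_sub_sq {C α β : ℝ} (hα : α ∈ Set.Ioo (-C) C)
    (hβ : β ∈ Set.Ioo (-C) C) :
    ∫ y in α..β, 1 / (π * √(C ^ 2 - y ^ 2)) = (arccos (α / C) - arccos (β / C)) / π := by
  have hC : 0 < C := by linarith [hα.1, hα.2]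
  have hpos (y : ℝ) (hy : y ∈ Set.uIcc α β) : 0 < C ^ 2 - y ^ 2 := by
    have := Set.ordConnected_Ioo.uIcc_subset hα hβ hy
    nlinarith [this.1, this.2]
  rw [show (arccos (α / C) - arccos (β / C)) / π = -arccos (β / C) / π - -arccos (α / C) / π by
    ring]
  refine intervalIntegral.integral_eq_sub_of_hasDerivAt (f := fun y => -arccos (y / C) / π)
    (fun y hy => ?_)
    (ContinuousOn.intervalIntegrable fun y hy => ?_)
  · have hy' := Set.ordConnected_Ioo.uIcc_subset hα hβ hy
    have h := (((hasDerivAt_arccos (x := y / C) ?_ ?_).comp y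
      ((hasDerivAt_id y).div_const C)).neg.div_const π)
    · refine h.congr_deriv ?_
      have hsqrt : √(1 - (y / C) ^ 2) = √(C ^ 2 - y ^ 2) / C := by
        rw [show 1 - (y / C) ^ 2 = (C ^ 2 - y ^ 2) / C ^ 2 by field_simp,
          Real.sqrt_div' _ (sq_nonneg C), Real.sqrt_sq hC.le]
      have := Real.sqrt_pos.2 (hpos y hy)
      rw [hsqrt]
      field_simp
    · rw [ne_eq, div_eq_iff hC.ne']; linarith [hy'.1]
    · rw [ne_eq, div_eq_iff hC.ne']; linarith [hy'.2]
  · have := Real.sqrt_pos.2 (hpos y hy)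
    fun_prop (disch := positivity)

theorem card_filter_mul_cos_two_pi_mem_Icc {C α β : ℝ} (hα : α ∈ Set.Ioc (-C) C)
    (hβ : β ∈ Set.Icc (-C) C) (s : Finset ℕ) (f : ℕ → ℝ) :
    #(s.filter fun n => C * cos (2 * π * f n) ∈ Set.Icc α β) =
      #(s.filter fun n =>
        Int.fract (f n) ∈ Set.Icc (arccos (β / C) / (2 * π)) (arccos (α / C) / (2 * π))) +
      #(s.filter fun n => Int.fract (f n) ∈
        Set.Icc (1 - arccos (α / C) / (2 * π)) (1 - arccos (β / C) / (2 * π))) := by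
  have hC : 0 < C := by linarith [hα.1, hα.2]
  have hu : α / C ∈ Set.Icc (-1) 1 := by
    constructor <;> [rw [le_div_iff₀ hC]; rw [div_le_iff₀ hC]] <;> linarith [hα.1, hα.2]
  have hv : β / C ∈ Set.Icc (-1) 1 := by
    constructor <;> [rw [le_div_iff₀ hC]; rw [div_le_iff₀ hC]] <;> linarith [hβ.1, hβ.2]
  have ht₂ : arccos (α / C) / (2 * π) < 1 / 2 := by
    have : arccos (α / C) < π := arccos_lt_pi.2 ((lt_div_iff₀ hC).2 (by linarith [hα.1]))
    rw [div_lt_iff₀ (by positivity)]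
    linarith
  rw [← card_union_of_disjoint (disjoint_filter.2 fun n _ h₁ h₂ => by linarith [h₁.2, h₂.1]),
    ← filter_or]
  refine congrArg card (filter_congr fun n _ => ?_)
  rw [← cos_two_pi_mul_mem_Icc_iff hu hv, Set.mem_Icc, Set.mem_Icc, le_div_iff₀ hC,
    div_le_iff₀ hC, mul_comm C]

/-- Arcsine law for sampled cosines: for `C > 0`, `a > 0`, `γ ∈ ℝ` and `[α,β] ⊆ (−C, C)`,
`(1/N)#{n ≤ N : C cos(2π(a√n+γ)) ∈ [α,β]} → ∫_α^β dy/(π√(C²−y²))`. -/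
theorem stmt11 (C a γ : ℝ) (hC : 0 < C) (ha : 0 < a) (α β : ℝ)
    (hα : -C < α) (hαβ : α ≤ β) (hβ : β < C) :
    Filter.Tendsto (fun N : ℕ =>
        (((Finset.Icc 1 N).filter fun n : ℕ =>
          C * Real.cos (2 * Real.pi * (a * Real.sqrt n + γ)) ∈ Set.Icc α β).card : ℝ) / N)
      Filter.atTop (nhds (∫ y in α..β, 1 / (Real.pi * Real.sqrt (C ^ 2 - y ^ 2)))) := by
  set t₁ := arccos (β / C) / (2 * π)
  set t₂ := arccos (α / C) / (2 * π)
  have ht₁ : 0 < t₁ := div_pos (arccos_pos.2 ((div_lt_one hC).2 hβ)) (by positivity)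
  have ht₁₂ : t₁ ≤ t₂ :=
    div_le_div_of_nonneg_right (arccos_le_arccos (by gcongr)) (by positivity)
  have ht₂ : t₂ ≤ 1 / 2 := by
    rw [div_le_iff₀ (by positivity)]
    linarith [arccos_le_pi (α / C)]
  rw [integral_one_div_pi_mul_sqrt_sq_sub_sq ⟨hα, by linarith⟩ ⟨by linarith, hβ⟩,
    show (arccos (α / C) - arccos (β / C)) / π = (t₂ - t₁) + ((1 - t₁) - (1 - t₂)) by
      simp only [t₁, t₂]; field_simp; ring]
  refine ((tendsto_card_fract_mem_Icc_div ha γ ht₁.le ht₁₂ (by linarith)).add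
    (tendsto_card_fract_mem_Icc_div ha γ (by linarith) (by linarith) (by linarith))).congr
    fun N => ?_
  rw [card_filter_mul_cos_two_pi_mem_Icc ⟨hα, by linarith⟩ ⟨by linarith, hβ.le⟩ _
    (fun n : ℕ => a * √n + γ), Nat.cast_add, add_div]
end

section
/- For N → ∞, the number of n ≤ N for which Braak's local conclusion fails — i.e., n is 'bad' in the sense that |cos(4g√m − π/4)| ≤ m^{−1/4+δ} for some m ∈ {n−2, …, n+2} — is O(N^{3/4+δ}) for any fixed δ ∈ (0, 1/4) and g > 0. -/
/-
If `|cos x| ≤ ε`, Jordan's inequality puts `x` within `πε/2` of a point of `π/2 + πℤ`. On a dyadic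
block `M < m ≤ 2M` the threshold `m^(-1/4+δ)` is at most `ε = M^(-1/4+δ)`, and `4g√m` sweeps over
`O(g√M)` such points while consecutive integers `m` move it by at least `g/√M`; so each point
catches `O(ε√M/g + 1)` values of `m`, and the block contains `O(Mε) = O(M^(3/4+δ))` bad `m`.
Summing over dyadic blocks gives `O(N^(3/4+δ))` bad `m ≤ N`, and each bad `m` spoils at most
five `n`.
-/

open scoped Classical
open Finset Real

theorem exists_int_abs_sub_le_of_abs_cos_le {x ε : ℝ} (h : |cos x| ≤ ε) :
    ∃ k : ℤ, |x - (k + 1 / 2) * π| ≤ π / 2 * ε := by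
  set k := round ((x - π / 2) / π)
  set r := x - (k + 1 / 2) * π
  have hr : |r| ≤ π / 2 := by
    have h := abs_sub_round ((x - π / 2) / π)
    have hr : r = ((x - π / 2) / π - k) * π := by field_simp; ring
    rw [hr, abs_mul, abs_of_pos pi_pos]
    nlinarith [pi_pos]
  have hcos : |cos x| = |sin r| := by
    rw [show x = r + π / 2 + k * π by ring, cos_add_int_mul_pi, abs_mul, abs_neg_one_zpow,
      one_mul, cos_add_pi_div_two, abs_neg]
  refine ⟨k, ?_⟩
  have := mul_abs_le_abs_sin hr
  rw [← hcos] at this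
  calc |r| = π / 2 * (2 / π * |r|) := by field_simp
    _ ≤ π / 2 * ε := by gcongr; linarith

theorem card_filter_abs_sub_le_le {S : Finset ℕ} {f : ℕ → ℝ} {d c r : ℝ} (hd : 0 < d)
    (hr : 0 ≤ r) (hf : ∀ m ∈ S, ∀ m' ∈ S, d * |(m : ℝ) - m'| ≤ |f m - f m'|) :
    (#{m ∈ S | |f m - c| ≤ r} : ℝ) ≤ 2 * r / d + 1 := by
  set T := S.filter (fun m => |f m - c| ≤ r)
  rcases T.eq_empty_or_nonempty with hT | hT
  · rw [hT, card_empty, Nat.cast_zero]; positivity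
  have hmem : ∀ m ∈ T, m ∈ S ∧ |f m - c| ≤ r := fun m hm => mem_filter.mp hm
  obtain ⟨haS, ha⟩ := hmem _ (T.min'_mem hT)
  obtain ⟨hbS, hb⟩ := hmem _ (T.max'_mem hT)
  have hab : T.min' hT ≤ T.max' hT := T.min'_le_max' hT
  have hspread : d * ((T.max' hT : ℝ) - T.min' hT) ≤ 2 * r := by
    have := hf _ hbS _ haS
    rw [abs_of_nonneg (sub_nonneg.mpr (by exact_mod_cast hab))] at this
    calc _ ≤ |f (T.max' hT) - f (T.min' hT)| := this
      _ ≤ |f (T.max' hT) - c| + |c - f (T.min' hT)| := abs_sub_le _ _ _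
      _ ≤ 2 * r := by rw [abs_sub_comm c]; linarith
  have hsub : T ⊆ Icc (T.min' hT) (T.max' hT) := fun m hm =>
    mem_Icc.mpr ⟨T.min'_le m hm, T.le_max' m hm⟩
  calc (#T : ℝ) ≤ #(Icc (T.min' hT) (T.max' hT)) := by exact_mod_cast card_le_card hsub
    _ = (T.max' hT : ℝ) - T.min' hT + 1 := by
        rw [Nat.card_Icc, Nat.cast_sub (by omega)]; push_cast; ring
    _ ≤ 2 * r / d + 1 := by gcongr; rw [le_div_iff₀ hd]; linarith

theorem abs_sub_le_mul_abs_sqrt_sub {x y B : ℝ} (hx : 0 ≤ x) (hy : 0 ≤ y) (hxB : √x ≤ B)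
    (hyB : √y ≤ B) : |x - y| ≤ 2 * B * |√x - √y| := by
  calc |x - y| = (√x + √y) * |√x - √y| := by
        rw [← abs_of_nonneg (by positivity : 0 ≤ √x + √y), ← abs_mul]
        congr 1
        linear_combination Real.sq_sqrt hy - Real.sq_sqrt hx
    _ ≤ 2 * B * |√x - √y| := by gcongr; linarith

theorem card_filter_abs_cos_sqrt_le {g ε : ℝ} (hg : 0 < g) (hε : 0 ≤ ε) (hε1 : ε ≤ 1) {M : ℕ}
    (hM : 0 < M) :
    (#((Ioc M (2 * M)).filter fun m : ℕ => |cos (4 * g * √m - π / 4)| ≤ ε) : ℝ) ≤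
      (8 * g * √M / π + 3) * (π * ε * √M / g + 1) := by
  set f : ℕ → ℝ := fun m => 4 * g * √m - π / 4
  set A := 8 * g * √M / π
  have hM' : 0 < √(M : ℝ) := Real.sqrt_pos.mpr (by exact_mod_cast hM)
  have hsqrt : ∀ m ∈ Ioc M (2 * M), √(m : ℝ) ≤ 2 * √M := by
    intro m hm
    refine Real.sqrt_le_iff.mpr ⟨by positivity, ?_⟩
    rw [mul_pow, Real.sq_sqrt (Nat.cast_nonneg M)]
    have := (mem_Ioc.mp hm).2
    have : (m : ℝ) ≤ 2 * M := by exact_mod_cast this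
    linarith
  have hclass : ∀ k : ℤ,
      (#{m ∈ Ioc M (2 * M) | |f m - (k + 1 / 2) * π| ≤ π / 2 * ε} : ℝ) ≤ π * ε * √M / g + 1 := by
    intro k
    have hspacing : ∀ m ∈ Ioc M (2 * M), ∀ m' ∈ Ioc M (2 * M),
        g / √M * |(m : ℝ) - m'| ≤ |f m - f m'| := by
      intro m hm m' hm'
      have := abs_sub_le_mul_abs_sqrt_sub (Nat.cast_nonneg m) (Nat.cast_nonneg m')
        (hsqrt m hm) (hsqrt m' hm')
      calc g / √M * |(m : ℝ) - m'| ≤ g / √M * (2 * (2 * √M) * |√m - √m'|) := by gcongr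
        _ = |f m - f m'| := by
          simp only [f, sub_sub_sub_cancel_right, ← mul_sub, abs_mul, abs_of_pos hg]
          field_simp
          ring
    convert card_filter_abs_sub_le_le (c := (k + 1 / 2) * π) (r := π / 2 * ε) (div_pos hg hM')
      (by positivity) hspacing using 2
    field_simp
  have hcover : ((Ioc M (2 * M)).filter fun m : ℕ => |cos (4 * g * √m - π / 4)| ≤ ε) ⊆
      (Icc (-1) ⌈A⌉).biUnion fun k : ℤ =>
        {m ∈ Ioc M (2 * M) | |f m - (k + 1 / 2) * π| ≤ π / 2 * ε} := by
    intro m hm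
    obtain ⟨hmI, hm⟩ := mem_filter.mp hm
    obtain ⟨k, hk⟩ := exists_int_abs_sub_le_of_abs_cos_le hm
    have hk_bounds := abs_le.mp (hk.trans (mul_le_of_le_one_right (by positivity) hε1))
    have hsqrt_nonneg : 0 ≤ √(m : ℝ) := Real.sqrt_nonneg _
    have hsqrt_le := hsqrt m hmI
    refine mem_biUnion.mpr ⟨k, mem_Icc.mpr ⟨?_, ?_⟩, mem_filter.mpr ⟨hmI, hk⟩⟩
    · have : (-2 : ℝ) < k := by nlinarith [pi_pos]
      exact_mod_cast (show (-2 : ℤ) < k by exact_mod_cast this)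
    · refine Int.cast_le.mp ((?_ : (k : ℝ) ≤ A).trans (Int.le_ceil A))
      rw [le_div_iff₀ pi_pos]
      nlinarith [pi_pos]
  have hcard : (#(Icc (-1 : ℤ) ⌈A⌉) : ℝ) ≤ A + 3 := by
    have hA : 0 ≤ A := by positivity
    have h : ((⌈A⌉ + 1 - -1).toNat : ℤ) = ⌈A⌉ + 2 := by have := Int.ceil_nonneg hA; omega
    rw [Int.card_Icc, show ((⌈A⌉ + 1 - -1).toNat : ℝ) = ⌈A⌉ + 2 by exact_mod_cast h]
    linarith [Int.ceil_lt_add_one A]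
  calc _ ≤ (#((Icc (-1) ⌈A⌉).biUnion fun k : ℤ =>
        {m ∈ Ioc M (2 * M) | |f m - (k + 1 / 2) * π| ≤ π / 2 * ε}) : ℝ) := by
        exact_mod_cast card_le_card hcover
    _ ≤ ∑ k ∈ Icc (-1) ⌈A⌉, (#{m ∈ Ioc M (2 * M) | |f m - (k + 1 / 2) * π| ≤ π / 2 * ε} : ℝ) := by
        exact_mod_cast card_biUnion_le
    _ ≤ #(Icc (-1) ⌈A⌉) * (π * ε * √M / g + 1) := by
        exact (sum_le_card_nsmul _ _ _ fun k _ => hclass k).trans_eq (nsmul_eq_mul _ _)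
    _ ≤ (A + 3) * (π * ε * √M / g + 1) := by gcongr

theorem card_filter_abs_cos_sqrt_le_rpow {g δ : ℝ} (hg : 0 < g) (hδ₀ : -(1 / 4) ≤ δ)
    (hδ₁ : δ ≤ 1 / 4) {M : ℕ} (hM : 0 < M) :
    (#((Ioc M (2 * M)).filter fun m : ℕ =>
        |cos (4 * g * √m - π / 4)| ≤ (m : ℝ) ^ (-(1 / 4 : ℝ) + δ)) : ℝ) ≤
      (11 + 8 * g / π + 3 * π / g) * (M : ℝ) ^ ((3 / 4 : ℝ) + δ) := by
  have hM0 : (0 : ℝ) < M := by exact_mod_cast hM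
  have hM1 : (1 : ℝ) ≤ M := by exact_mod_cast hM
  set ε := (M : ℝ) ^ (-(1 / 4 : ℝ) + δ)
  set P := (M : ℝ) ^ ((3 / 4 : ℝ) + δ)
  have hsub : ((Ioc M (2 * M)).filter fun m : ℕ =>
        |cos (4 * g * √m - π / 4)| ≤ (m : ℝ) ^ (-(1 / 4 : ℝ) + δ)) ⊆
      (Ioc M (2 * M)).filter fun m : ℕ => |cos (4 * g * √m - π / 4)| ≤ ε := by
    refine monotone_filter_right _ fun m hm hbad => hbad.trans ?_
    exact Real.rpow_le_rpow_of_nonpos hM0 (by exact_mod_cast (mem_Ioc.mp hm).1.le) (by linarith)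
  have hMε : M * ε = P := by
    rw [← Real.rpow_one_add' hM0.le (by linarith), show 1 + (-(1 / 4) + δ) = 3 / 4 + δ by ring]
  have hsqrt : √M = (M : ℝ) ^ (1 / 2 : ℝ) := Real.sqrt_eq_rpow M
  have hsqrtP : √M ≤ P := by
    rw [hsqrt]; exact Real.rpow_le_rpow_of_exponent_le hM1 (by linarith)
  have hεsqrtP : ε * √M ≤ P := by
    rw [hsqrt, ← Real.rpow_add hM0]; exact Real.rpow_le_rpow_of_exponent_le hM1 (by linarith)
  have hP : 1 ≤ P := Real.one_le_rpow hM1 (by linarith)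
  have hε : 0 ≤ ε := by positivity
  have hε1 : ε ≤ 1 := Real.rpow_le_one_of_one_le_of_nonpos hM1 (by linarith)
  calc _ ≤ (#((Ioc M (2 * M)).filter fun m : ℕ => |cos (4 * g * √m - π / 4)| ≤ ε) : ℝ) := by
        exact_mod_cast card_le_card hsub
    _ ≤ (8 * g * √M / π + 3) * (π * ε * √M / g + 1) := card_filter_abs_cos_sqrt_le hg hε hε1 hM
    _ = 8 * (√M * √M * ε) + 8 * g / π * √M + 3 * π / g * (ε * √M) + 3 := by
        field_simp
        ring
    _ ≤ (11 + 8 * g / π + 3 * π / g) * P := by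
        rw [Real.mul_self_sqrt hM0.le, hMε]
        have := mul_le_mul_of_nonneg_left hsqrtP (by positivity : 0 ≤ 8 * g / π)
        have := mul_le_mul_of_nonneg_left hεsqrtP (by positivity : 0 ≤ 3 * π / g)
        linarith

theorem exists_card_filter_Icc_le_of_dyadic {P : ℕ → Prop} [DecidablePred P] {C s : ℝ}
    (hs : 0 < s) (h : ∀ M, 0 < M → (#{m ∈ Ioc M (2 * M) | P m} : ℝ) ≤ C * (M : ℝ) ^ s) :
    ∃ K, 0 < K ∧ ∀ N, (#{m ∈ Icc 1 N | P m} : ℝ) ≤ K * (N : ℝ) ^ s := by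
  have hC : 0 ≤ C := by simpa using (Nat.cast_nonneg _).trans (h 1 one_pos)
  have hr : 1 < (2 : ℝ) ^ s := Real.one_lt_rpow (by norm_num) hs
  set K := 1 + C / ((2 : ℝ) ^ s - 1)
  have hK : 1 ≤ K := le_add_of_nonneg_right (div_nonneg hC (by linarith))
  have hpow : ∀ J : ℕ, (#{m ∈ Icc 1 (2 ^ J) | P m} : ℝ) ≤ K * ((2 ^ J : ℕ) : ℝ) ^ s := by
    intro J
    induction J with
    | zero =>
      have : #{m ∈ Icc 1 (2 ^ 0) | P m} ≤ 1 := (card_filter_le _ _).trans (by simp)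
      simpa using (Nat.cast_le.mpr this).trans (by exact_mod_cast hK)
    | succ J ih =>
      have hsplit : Icc 1 (2 ^ (J + 1)) = Icc 1 (2 ^ J) ∪ Ioc (2 ^ J) (2 * 2 ^ J) := by
        have := Nat.one_le_two_pow (n := J)
        ext m; simp only [mem_union, mem_Icc, mem_Ioc, pow_succ]; omega
      have hx : 0 ≤ ((2 ^ J : ℕ) : ℝ) ^ s := by positivity
      have hKC : C = (K - 1) * ((2 : ℝ) ^ s - 1) := by
        rw [add_sub_cancel_left, div_mul_cancel₀ _ (by linarith)]
      calc (#{m ∈ Icc 1 (2 ^ (J + 1)) | P m} : ℝ)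
          ≤ #{m ∈ Icc 1 (2 ^ J) | P m} + #{m ∈ Ioc (2 ^ J) (2 * 2 ^ J) | P m} := by
            rw [hsplit, filter_union]; exact_mod_cast card_union_le _ _
        _ ≤ K * ((2 ^ J : ℕ) : ℝ) ^ s + C * ((2 ^ J : ℕ) : ℝ) ^ s :=
            add_le_add ih (h _ (by positivity))
        _ ≤ K * (2 ^ s * ((2 ^ J : ℕ) : ℝ) ^ s) := by rw [hKC]; nlinarith
        _ = K * ((2 ^ (J + 1) : ℕ) : ℝ) ^ s := by
            rw [pow_succ', Nat.cast_mul, Real.mul_rpow (by norm_num) (by positivity)]; norm_num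
  refine ⟨K * 2 ^ s, by positivity, fun N => ?_⟩
  rcases N.eq_zero_or_pos with rfl | hN
  · simp [Real.zero_rpow hs.ne']
  set J := Nat.log 2 N
  have hNJ : N ≤ 2 ^ (J + 1) := (Nat.lt_pow_succ_log_self (by norm_num) N).le
  have hJN : ((2 ^ J : ℕ) : ℝ) ≤ N := by exact_mod_cast Nat.pow_log_le_self 2 hN.ne'
  calc (#{m ∈ Icc 1 N | P m} : ℝ) ≤ #{m ∈ Icc 1 (2 ^ (J + 1)) | P m} := by
        exact_mod_cast card_le_card (filter_subset_filter _ (Icc_subset_Icc le_rfl hNJ))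
    _ ≤ K * ((2 ^ (J + 1) : ℕ) : ℝ) ^ s := hpow _
    _ = K * 2 ^ s * ((2 ^ J : ℕ) : ℝ) ^ s := by
        rw [pow_succ', Nat.cast_mul, Real.mul_rpow (by norm_num) (by positivity)]; push_cast; ring
    _ ≤ K * 2 ^ s * (N : ℝ) ^ s := by gcongr

theorem card_filter_exists_mem_Icc_sub_add_le {P : ℕ → Prop} [DecidablePred P] (h₀ : ¬P 0)
    (N k : ℕ) :
    #{n ∈ Icc 1 N | ∃ m ∈ Icc (n - k) (n + k), P m} ≤ (2 * k + 1) * #{m ∈ Icc 1 (N + k) | P m} := by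
  have hsub : {n ∈ Icc 1 N | ∃ m ∈ Icc (n - k) (n + k), P m} ⊆
      {m ∈ Icc 1 (N + k) | P m}.biUnion fun m => Icc (m - k) (m + k) := by
    intro n hn
    obtain ⟨hnN, m, hm, hPm⟩ := mem_filter.mp hn
    have hm0 : m ≠ 0 := fun h => h₀ (h ▸ hPm)
    simp only [mem_Icc] at hnN hm
    exact mem_biUnion.mpr ⟨m, mem_filter.mpr ⟨mem_Icc.mpr (by omega), hPm⟩, mem_Icc.mpr (by omega)⟩
  calc _ ≤ _ := card_le_card hsub
    _ ≤ _ := card_biUnion_le_card_mul _ _ _ fun m _ => by rw [Nat.card_Icc]; omega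
    _ = _ := mul_comm _ _

/-- The number of `n ≤ N` that are 'bad' in the sense that
`|cos(4g√m − π/4)| ≤ m^{−1/4+δ}` for some `m ∈ {n−2,…,n+2}` is `O(N^{3/4+δ})`. -/
theorem stmt18 (g δ : ℝ) (hg : 0 < g) (hδ : δ ∈ Set.Ioo (0 : ℝ) (1/4)) :
    ∃ c : ℝ, 0 < c ∧ ∀ N : ℕ, 1 ≤ N →
      (((Finset.Icc 1 N).filter fun n : ℕ =>
          ∃ m ∈ Finset.Icc (n - 2) (n + 2),
            |Real.cos (4 * g * Real.sqrt m - Real.pi / 4)| ≤ (m : ℝ) ^ (-(1/4 : ℝ) + δ)).card : ℝ)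
        ≤ c * (N : ℝ) ^ ((3/4 : ℝ) + δ) := by
  obtain ⟨hδ₀, hδ₁⟩ := hδ
  obtain ⟨K, hK, hbad⟩ := exists_card_filter_Icc_le_of_dyadic (by linarith)
    fun M hM => card_filter_abs_cos_sqrt_le_rpow hg (by linarith) hδ₁.le hM
  have hzero : ¬|cos (4 * g * √((0 : ℕ) : ℝ) - π / 4)| ≤ ((0 : ℕ) : ℝ) ^ (-(1 / 4 : ℝ) + δ) := by
    rw [Nat.cast_zero, Real.zero_rpow (by linarith), Real.sqrt_zero, mul_zero, zero_sub, cos_neg,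
      cos_pi_div_four]
    simp
  refine ⟨5 * K * 3 ^ ((3 / 4 : ℝ) + δ), by positivity, fun N hN => ?_⟩
  have hN3 : ((N + 2 : ℕ) : ℝ) ≤ 3 * N := by push_cast; linarith [(Nat.one_le_cast (α := ℝ)).mpr hN]
  calc _ ≤ (5 : ℝ) * #((Icc 1 (N + 2)).filter fun m : ℕ =>
        |cos (4 * g * √m - π / 4)| ≤ (m : ℝ) ^ (-(1 / 4 : ℝ) + δ)) := by
        exact_mod_cast card_filter_exists_mem_Icc_sub_add_le hzero N 2
    _ ≤ 5 * (K * ((N + 2 : ℕ) : ℝ) ^ ((3 / 4 : ℝ) + δ)) := by gcongr; exact hbad _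
    _ ≤ 5 * (K * (3 * N : ℝ) ^ ((3 / 4 : ℝ) + δ)) := by gcongr
    _ = 5 * K * 3 ^ ((3 / 4 : ℝ) + δ) * (N : ℝ) ^ ((3 / 4 : ℝ) + δ) := by
        rw [Real.mul_rpow (by norm_num) (by positivity)]; ring
end
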